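/- arXiv:2501.00991 — 3 statements merged into one kernel-verified Lean document; each statement's English description precedes it below -/
import Mathlib

section
/- Every graph of twin-width at most 1 is perfect, i.e., every induced subgraph has chromatic number equal to its clique number. -/
open Finset

/-- Two vertex sets are *homogeneous* in `G` if they are complete or anticomplete
to each other. A red edge of a trigraph in a contraction sequence joins two parts
that are not homogeneous. -/
def Homogeneous {V : Type*} (G : SimpleGraph V) (X Y : Finset V) : Prop :=
  (∀ x ∈ X, ∀ y ∈ Y, G.Adj x y) ∨ (∀ x ∈ X, ∀ y ∈ Y, ¬ G.Adj x y)

/-- A contraction sequence of a graph on vertex type `V` (with `n = Fintype.card V`),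
encoded by the partitions of `V` into the parts of the trigraphs `G_n, …, G_1`:
`parts i` is the partition whose blocks are the parts of the vertices of `G_i`.
`G_n` is the discrete partition, and `G_i` is obtained from `G_{i+1}` by merging two parts. -/
structure ContractionSeq (V : Type*) [Fintype V] [DecidableEq V] where
  parts : ℕ → Finpartition (Finset.univ : Finset V)
  parts_card : ∀ i, 1 ≤ i → i ≤ Fintype.card V → (parts i).parts.card = i
  parts_top : ∀ X ∈ (parts (Fintype.card V)).parts, X.card = 1
  merge : ∀ i, 1 ≤ i → i < Fintype.card V →
    ∃ X ∈ (parts (i + 1)).parts, ∃ Y ∈ (parts (i + 1)).parts, X ≠ Y ∧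
      (parts i).parts = insert (X ∪ Y) ((((parts (i + 1)).parts).erase X).erase Y)

/-- Every part of the partition `P` (i.e. every vertex of the corresponding trigraph)
is incident to at most `d` red edges. -/
def RedDegLE {V : Type*} [Fintype V] [DecidableEq V] (G : SimpleGraph V)
    (P : Finpartition (Finset.univ : Finset V)) (d : ℕ) : Prop :=
  ∀ X ∈ P.parts, {Y | Y ∈ P.parts ∧ Y ≠ X ∧ ¬ Homogeneous G X Y}.ncard ≤ d

/-- `C` is a `d`-sequence of `G`: every trigraph in it has maximum red degree at most `d`. -/
def IsDSeq {V : Type*} [Fintype V] [DecidableEq V] (G : SimpleGraph V)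
    (C : ContractionSeq V) (d : ℕ) : Prop :=
  ∀ i, 1 ≤ i → i ≤ Fintype.card V → RedDegLE G (C.parts i) d

/-- The twin-width of `G`: the least `d` such that `G` has a `d`-sequence. -/
noncomputable def tww {V : Type*} [Fintype V] [DecidableEq V] (G : SimpleGraph V) : ℕ :=
  sInf {d | ∃ C : ContractionSeq V, IsDSeq G C d}

/-- `(σ, τ)` is a realiser of `G` as a permutation graph. -/
def IsRealiser {V : Type*} [Fintype V] (G : SimpleGraph V)
    (σ τ : V ≃ Fin (Fintype.card V)) : Prop :=
  ∀ u v : V, G.Adj u v ↔ ((σ u < σ v ∧ τ v < τ u) ∨ (σ v < σ u ∧ τ u < τ v))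

/-- `G` is a permutation graph. -/
def IsPermutationGraph {V : Type*} [Fintype V] (G : SimpleGraph V) : Prop :=
  ∃ σ τ : V ≃ Fin (Fintype.card V), IsRealiser G σ τ

/-- `I` is an interval for the ordering `σ` (its image is a set of consecutive integers,
equivalently it is convex). -/
def IsIntervalFor {V : Type*} {n : ℕ} (σ : V ≃ Fin n) (I : Set V) : Prop :=
  ∀ u v w : V, u ∈ I → w ∈ I → σ u ≤ σ v → σ v ≤ σ w → v ∈ I

/-- `M` is a module of `G`. -/
def IsModule {V : Type*} (G : SimpleGraph V) (M : Set V) : Prop :=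
  ∀ v ∉ M, (∀ m ∈ M, G.Adj v m) ∨ (∀ m ∈ M, ¬ G.Adj v m)

/-- `G` is prime (w.r.t. modules): all its modules are trivial. -/
def IsPrimeGraph {V : Type*} (G : SimpleGraph V) : Prop :=
  ∀ M : Set V, IsModule G M → M.Subsingleton ∨ M = Set.univ

/-- `M` is a strong module of `G`. -/
def IsStrongModule {V : Type*} (G : SimpleGraph V) (M : Set V) : Prop :=
  IsModule G M ∧ ∀ M' : Set V, IsModule G M' → M ⊆ M' ∨ M' ⊆ M ∨ M ∩ M' = ∅

/-- The underlying graph of the trigraph corresponding to the partition `P` in a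
contraction sequence of `G`: parts `X ≠ Y` are adjacent (by a black or red edge)
iff some edge of `G` joins them. -/
def QuotientGraph {V : Type*} [Fintype V] [DecidableEq V] (G : SimpleGraph V)
    (P : Finpartition (Finset.univ : Finset V)) :
    SimpleGraph {X : Finset V // X ∈ P.parts} where
  Adj X Y := X ≠ Y ∧ ∃ x ∈ X.1, ∃ y ∈ Y.1, G.Adj x y
  symm := by
    constructor
    rintro X Y ⟨hne, x, hx, y, hy, hadj⟩
    exact ⟨hne.symm, y, hy, x, hx, hadj.symm⟩
  loopless := by constructor; rintro X ⟨hne, -⟩; exact hne rfl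

/-- `w` lies strictly between `a` and `b` in the ordering `σ`. -/
def StrictlyBetween {V : Type*} {n : ℕ} (σ : V ≃ Fin n) (a w b : V) : Prop :=
  (σ a < σ w ∧ σ w < σ b) ∨ (σ b < σ w ∧ σ w < σ a)

/-- `G` is distance-hereditary. -/
def DistanceHereditary {V : Type*} (G : SimpleGraph V) : Prop :=
  ∀ S : Set V, (G.induce S).Connected →
    ∀ u v : S, (G.induce S).dist u v = G.dist ↑u ↑v

/-- There is a path from `a` to `b` in `G` containing no vertex equal or adjacent to `c`. -/
def AvoidingPath {V : Type*} (G : SimpleGraph V) (a b c : V) : Prop :=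
  ∃ w : G.Walk a b, w.IsPath ∧ ∀ v ∈ w.support, v ≠ c ∧ ¬ G.Adj c v

/-- `x, y, z` form an asteroidal triple of `G`. -/
def AsteroidalTriple {V : Type*} (G : SimpleGraph V) (x y z : V) : Prop :=
  x ≠ y ∧ y ≠ z ∧ x ≠ z ∧
    AvoidingPath G x y z ∧ AvoidingPath G y z x ∧ AvoidingPath G x z y

/-- `G` is asteroidal triple-free. -/
def ATFree {V : Type*} (G : SimpleGraph V) : Prop :=
  ∀ x y z : V, ¬ AsteroidalTriple G x y z

/-- `G` is a cograph: it has no induced path on four vertices. -/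
def IsCograph {V : Type*} (G : SimpleGraph V) : Prop :=
  IsEmpty (SimpleGraph.pathGraph 4 ↪g G)

/-!
Along a 1-sequence, consider the last trigraph in which two vertices `u, v` of a vertex set `S`
share a part `M`. That part was just created by a merge, so `M ∩ S = {u, v}` and every other part
meets `S` at most once. A vertex of `S` distinguishing `u` from `v` lies in a part joined to `M`
by a red edge, and `M` has at most one; so at most one vertex of `S` distinguishes them, and one
of `u, v` dominates the other in `G[S]`.

A graph in which every induced subgraph on at least two vertices has such a dominated pair
`N(a) ⊆ N[b]` is perfect, by induction on `S`: if `a, b` are non-adjacent, `a` takes the colour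
of `b` in an optimal colouring of `G[S - a]`. If they are adjacent, the colour class of `b` in
such a colouring meets every maximum clique of `G[S]` (a clique through `a` extends by `b`, and one
avoiding `a` uses every colour), so the rest has smaller clique number and is coloured by
induction, with the class of `b` as one extra colour.
-/

namespace Finpartition

variable {V : Type*} [Fintype V] [DecidableEq V]

def collapse (A : Finset V) (hA : A.Nonempty) : Finpartition (univ : Finset V) :=
  (⊥ : Finpartition Aᶜ).extend hA.ne_empty disjoint_compl_left compl_sup_eq_top

theorem parts_collapse (A : Finset V) (hA : A.Nonempty) :
    (collapse A hA).parts = insert A (Aᶜ.map ⟨singleton, singleton_injective⟩) := rfl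

theorem card_parts_collapse (A : Finset V) (hA : A.Nonempty) :
    #(collapse A hA).parts = #Aᶜ + 1 := by
  rw [collapse, card_extend, card_bot]

theorem card_eq_one_of_mem_parts_collapse {A : Finset V} {hA : A.Nonempty} (hA₁ : #A = 1)
    {X : Finset V} (hX : X ∈ (collapse A hA).parts) : #X = 1 := by
  rw [parts_collapse, mem_insert, mem_map] at hX
  obtain rfl | ⟨x, -, rfl⟩ := hX
  · exact hA₁
  · exact card_singleton x

theorem parts_collapse_of_eq_insert {A B : Finset V} (hA : A.Nonempty) (hB : B.Nonempty) {w : V}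
    (h : B = insert w A) :
    (collapse B hB).parts = insert (A ∪ {w}) (((collapse A hA).parts.erase A).erase {w}) := by
  subst h
  have hA_ne : A ∉ Aᶜ.map ⟨singleton, singleton_injective⟩ := by
    simp only [mem_map, Function.Embedding.coeFn_mk, not_exists, not_and]
    rintro x hx rfl
    exact mem_compl.mp hx (mem_singleton_self x)
  rw [parts_collapse, parts_collapse, erase_insert hA_ne, compl_insert, union_singleton]
  exact congrArg _ (map_erase _ _ _)

end Finpartition

namespace ContractionSeq

variable {V : Type*} [Fintype V]

def initialSeg (e : Fin (Fintype.card V) ≃ V) (j : ℕ) : Finset V :=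
  ({i | (i : ℕ) < j} : Finset (Fin (Fintype.card V))).map e.toEmbedding

theorem card_initialSeg (e : Fin (Fintype.card V) ≃ V) (j : ℕ) :
    #(initialSeg e j) = min (Fintype.card V) j := by
  rw [initialSeg, card_map, Fin.card_filter_val_lt]

@[simp]
theorem mem_initialSeg (e : Fin (Fintype.card V) ≃ V) (j : ℕ) (i : Fin (Fintype.card V)) :
    e i ∈ initialSeg e j ↔ (i : ℕ) < j := by
  simp [initialSeg]

theorem initialSeg_nonempty [Nonempty V] (e : Fin (Fintype.card V) ≃ V) {j : ℕ} (hj : 0 < j) :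
    (initialSeg e j).Nonempty := by
  rw [← card_pos, card_initialSeg]
  exact lt_min Fintype.card_pos hj

theorem initialSeg_succ [DecidableEq V] (e : Fin (Fintype.card V) ≃ V) {j : ℕ}
    (hj : j < Fintype.card V) :
    initialSeg e (j + 1) = insert (e ⟨j, hj⟩) (initialSeg e j) := by
  ext v
  obtain ⟨i, rfl⟩ := e.surjective v
  simp only [initialSeg, Order.lt_add_one_iff, mem_map_mk, mem_filter, mem_univ, true_and,
    mem_insert, EmbeddingLike.apply_eq_iff_eq, Fin.ext_iff]
  omega

variable [DecidableEq V] [Nonempty V]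

/-- The index `n - i + 1` (not `n + 1 - i`) keeps the collapsed set nonempty also for the junk
indices `i > n`. -/
def ofEquiv (e : Fin (Fintype.card V) ≃ V) : ContractionSeq V where
  parts i := Finpartition.collapse (initialSeg e (Fintype.card V - i + 1))
    (initialSeg_nonempty e (Nat.succ_pos _))
  parts_card i hi hin := by
    rw [Finpartition.card_parts_collapse, card_compl, card_initialSeg]
    omega
  parts_top X hX := by
    refine Finpartition.card_eq_one_of_mem_parts_collapse ?_ hX
    rw [card_initialSeg, Nat.sub_self, min_eq_right Fintype.card_pos]
  merge i hi hin := by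
    have hj : Fintype.card V - (i + 1) + 1 < Fintype.card V := by omega
    have hnew : e ⟨_, hj⟩ ∉ initialSeg e (Fintype.card V - (i + 1) + 1) := by simp
    refine ⟨_, mem_insert_self _ _, {e ⟨_, hj⟩}, ?_, ?_, ?_⟩
    · exact mem_insert_of_mem (mem_map_of_mem _ (mem_compl.mpr hnew))
    · rintro h
      exact hnew (h ▸ mem_singleton_self _)
    · refine Finpartition.parts_collapse_of_eq_insert _ _ ?_
      rw [← initialSeg_succ e hj]
      congr 1
      omega

end ContractionSeq

section TwinWidth

variable {V : Type*} [Fintype V] [DecidableEq V] (G : SimpleGraph V)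

theorem redDegLE_card (P : Finpartition (univ : Finset V)) : RedDegLE G P (Fintype.card V) :=
  fun _ _ => calc
    _ ≤ (P.parts : Set (Finset V)).ncard := Set.ncard_le_ncard fun _ hY => hY.1
    _ = #P.parts := Set.ncard_coe_finset _
    _ ≤ Fintype.card V := P.card_parts_le_card

theorem exists_isDSeq_of_tww_le [Nonempty V] {d : ℕ} (h : tww G ≤ d) :
    ∃ C : ContractionSeq V, IsDSeq G C d := by
  have hne : {d | ∃ C : ContractionSeq V, IsDSeq G C d}.Nonempty :=
    ⟨_, .ofEquiv (Fintype.equivFin V).symm, fun _ _ _ => redDegLE_card G _⟩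
  obtain ⟨C, hC⟩ := Nat.sInf_mem hne
  exact ⟨C, fun i hi hin X hX => (hC i hi hin X hX).trans h⟩

end TwinWidth

section NearTwins

variable {V : Type*} (G : SimpleGraph V)

/-- `b` dominates `a` in `G[S]`: `N(a) ⊆ N[b]` within `S`. -/
def Dominates (S : Finset V) (b a : V) : Prop :=
  ∀ z ∈ S, z ≠ b → G.Adj a z → G.Adj b z

def distinguishers (S : Finset V) (u v : V) : Set V :=
  {z | z ∈ S ∧ z ≠ u ∧ z ≠ v ∧ ¬(G.Adj u z ↔ G.Adj v z)}

variable {G}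

theorem dominates_or_dominates_of_subsingleton {S : Finset V} {u v : V}
    (h : (distinguishers G S u v).Subsingleton) :
    Dominates G S u v ∨ Dominates G S v u := by
  by_contra hcon
  simp only [Dominates, not_or] at hcon
  push Not at hcon
  obtain ⟨⟨z₁, hz₁S, hz₁u, hvz₁, huz₁⟩, ⟨z₂, hz₂S, hz₂v, huz₂, hvz₂⟩⟩ := hcon
  have : z₁ = z₂ :=
    h ⟨hz₁S, hz₁u, (G.ne_of_adj hvz₁).symm, fun h => huz₁ (h.mpr hvz₁)⟩
      ⟨hz₂S, (G.ne_of_adj huz₂).symm, hz₂v, fun h => hvz₂ (h.mp huz₂)⟩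
  exact hvz₂ (this ▸ hvz₁)

variable [Fintype V] [DecidableEq V]

theorem RedDegLE.subsingleton_distinguishers {P : Finpartition (univ : Finset V)}
    (hP : RedDegLE G P 1) {M S : Finset V} (hM : M ∈ P.parts) {u v : V} (hMS : M ∩ S = {u, v})
    (hS : ∀ N ∈ P.parts, N ≠ M → #(N ∩ S) ≤ 1) :
    (distinguishers G S u v).Subsingleton := by
  have hu : u ∈ M ∩ S := hMS ▸ mem_insert_self u {v}
  have hv : v ∈ M ∩ S := hMS ▸ mem_insert_of_mem (mem_singleton_self v)
  have hred : ∀ z ∈ distinguishers G S u v,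
      P.part z ∈ {Y | Y ∈ P.parts ∧ Y ≠ M ∧ ¬ Homogeneous G M Y} := by
    rintro z ⟨hzS, hzu, hzv, hz⟩
    have hzM : z ∉ M := fun hzM => by
      have : z ∈ M ∩ S := mem_inter.mpr ⟨hzM, hzS⟩
      simp [hMS, hzu, hzv] at this
    have hz_part : z ∈ P.part z := P.mem_part_self.mpr (mem_univ z)
    refine ⟨P.part_mem.mpr (mem_univ z), fun h => hzM (h ▸ hz_part), ?_⟩
    rintro (hadj | hnadj)
    · exact hz (iff_of_true (hadj u (mem_of_mem_inter_left hu) z hz_part)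
        (hadj v (mem_of_mem_inter_left hv) z hz_part))
    · exact hz (iff_of_false (hnadj u (mem_of_mem_inter_left hu) z hz_part)
        (hnadj v (mem_of_mem_inter_left hv) z hz_part))
  intro z₁ h₁ z₂ h₂
  have hpart : P.part z₁ = P.part z₂ :=
    (Set.ncard_le_one_iff).mp (hP M hM) (hred z₁ h₁) (hred z₂ h₂)
  refine card_le_one.mp (hS _ (hred z₁ h₁).1 (hred z₁ h₁).2.1) z₁ ?_ z₂ ?_
  · exact mem_inter.mpr ⟨P.mem_part_self.mpr (mem_univ z₁), h₁.1⟩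
  · exact mem_inter.mpr ⟨hpart ▸ P.mem_part_self.mpr (mem_univ z₂), h₂.1⟩

theorem ContractionSeq.exists_part_inter_eq_pair (C : ContractionSeq V) {S : Finset V}
    (hS : 1 < #S) :
    ∃ i, 1 ≤ i ∧ i ≤ Fintype.card V ∧ ∃ M ∈ (C.parts i).parts, ∃ u v, u ≠ v ∧
      M ∩ S = {u, v} ∧ ∀ N ∈ (C.parts i).parts, N ≠ M → #(N ∩ S) ≤ 1 := by
  set n := Fintype.card V
  have hn : 1 ≤ n := (hS.trans_le (card_le_univ S)).le
  let Separates (i : ℕ) : Prop := ∀ N ∈ (C.parts i).parts, #(N ∩ S) ≤ 1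
  have hsep_top : Separates n := fun N hN =>
    (card_le_card inter_subset_left).trans (C.parts_top N hN).le
  have hsep_one : ¬ Separates 1 := by
    obtain ⟨N, hN⟩ := card_eq_one.mp (C.parts_card 1 le_rfl hn)
    have hN_univ : N = univ := by simpa [hN] using (C.parts 1).sup_parts
    intro h
    have := h N (hN ▸ mem_singleton_self N)
    rw [hN_univ, univ_inter] at this
    omega
  -- the last trigraph in which two vertices of `S` share a part
  set i := Nat.findGreatest (fun i => ¬ Separates i) n
  have hi : ¬ Separates i := Nat.findGreatest_spec (P := fun i => ¬ Separates i) hn hsep_one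
  have hi1 : 1 ≤ i := Nat.le_findGreatest (P := fun i => ¬ Separates i) hn hsep_one
  have hin : i < n := lt_of_le_of_ne (Nat.findGreatest_le n) fun h => hi (h ▸ hsep_top)
  have hi_succ : Separates (i + 1) :=
    not_not.mp (Nat.findGreatest_is_greatest (Nat.lt_succ_self i) hin)
  obtain ⟨X, hX, Y, hY, -, hparts⟩ := C.merge i hi1 hin
  have hothers : ∀ N ∈ (C.parts i).parts, N ≠ X ∪ Y → #(N ∩ S) ≤ 1 := fun N hN hne => by
    rw [hparts, mem_insert] at hN
    exact hi_succ N (mem_of_mem_erase (mem_of_mem_erase (hN.resolve_left hne)))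
  have hcard : #((X ∪ Y) ∩ S) = 2 := by
    refine le_antisymm ?_ ?_
    · rw [union_inter_distrib_right]
      exact (card_union_le _ _).trans (add_le_add (hi_succ X hX) (hi_succ Y hY))
    · by_contra! hlt
      refine hi fun N hN => ?_
      by_cases hne : N = X ∪ Y
      · exact hne ▸ Nat.le_of_lt_succ hlt
      · exact hothers N hN hne
  obtain ⟨u, v, huv, hMS⟩ := card_eq_two.mp hcard
  exact ⟨i, hi1, hin.le, X ∪ Y, hparts ▸ mem_insert_self _ _, u, v, huv, hMS, hothers⟩

theorem IsDSeq.exists_dominates {C : ContractionSeq V} (hC : IsDSeq G C 1) {S : Finset V}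
    (hS : 1 < #S) : ∃ a ∈ S, ∃ b ∈ S, a ≠ b ∧ Dominates G S b a := by
  obtain ⟨i, hi1, hin, M, hM, u, v, huv, hMS, hS⟩ := C.exists_part_inter_eq_pair hS
  have hu : u ∈ M ∩ S := hMS ▸ mem_insert_self u {v}
  have hv : v ∈ M ∩ S := hMS ▸ mem_insert_of_mem (mem_singleton_self v)
  rcases dominates_or_dominates_of_subsingleton
    ((hC i hi1 hin).subsingleton_distinguishers hM hMS hS) with h | h
  · exact ⟨v, mem_of_mem_inter_right hv, u, mem_of_mem_inter_right hu, huv.symm, h⟩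
  · exact ⟨u, mem_of_mem_inter_right hu, v, mem_of_mem_inter_right hv, huv, h⟩

end NearTwins

section Coloring

open SimpleGraph

variable {V : Type*} (G : SimpleGraph V)

def IsProperColoringOn (S : Finset V) (k : ℕ) (c : V → ℕ) : Prop :=
  (∀ x ∈ S, c x < k) ∧ ∀ x ∈ S, ∀ y ∈ S, G.Adj x y → c x ≠ c y

variable {G} {S : Finset V} {k : ℕ} {c : V → ℕ}

theorem IsProperColoringOn.colorable (hc : IsProperColoringOn G S k c) :
    (G.induce (S : Set V)).Colorable k :=
  ⟨Coloring.mk (fun x => ⟨c x, hc.1 x x.2⟩)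
    fun {x y} hxy h => hc.2 x x.2 y y.2 (induce_adj.mp hxy) (Fin.ext_iff.mp h)⟩

theorem isProperColoringOn_zero_of_card_le_one (hS : #S ≤ 1) (hk : G.CliqueFreeOn S (k + 1)) :
    IsProperColoringOn G S k 0 := by
  refine ⟨fun x hx => Nat.pos_of_ne_zero fun hk0 => ?_, fun x hx y hy hxy => ?_⟩
  · exact hk (t := {x}) (by simpa using hx) (hk0 ▸ isNClique_one.mpr ⟨x, rfl⟩)
  · exact absurd hxy (card_le_one.mp hS x hx y hy ▸ G.loopless.irrefl x)

theorem IsProperColoringOn.exists_mem_color_eq (hc : IsProperColoringOn G S k c) {t : Finset V}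
    (hts : t ⊆ S) (ht : G.IsNClique k t) {j : ℕ} (hj : j < k) : ∃ x ∈ t, c x = j := by
  have hinj : Set.InjOn c t := fun x hx y hy hxy => by
    by_contra hne
    exact hc.2 x (hts hx) y (hts hy) (ht.1 hx hy hne) hxy
  have himage : t.image c = range k := by
    refine eq_of_subset_of_card_le (fun y hy => ?_) ?_
    · obtain ⟨x, hx, rfl⟩ := mem_image.mp hy
      exact mem_range.mpr (hc.1 x (hts hx))
    · rw [card_image_of_injOn hinj, ht.2, card_range]
  exact mem_image.mp (himage ▸ mem_range.mpr hj)

variable [DecidableEq V]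

theorem IsProperColoringOn.ite_of_independent {B : Finset V} {m : ℕ}
    (hc : IsProperColoringOn G (S \ B) m c) (hB : ∀ x ∈ B, ∀ y ∈ B, ¬ G.Adj x y) :
    IsProperColoringOn G S (m + 1) (fun x => if x ∈ B then m else c x) := by
  have hS {x} (hx : x ∈ S) (hxB : x ∉ B) : x ∈ S \ B := mem_sdiff.mpr ⟨hx, hxB⟩
  refine ⟨fun x hx => ?_, fun x hx y hy hxy => ?_⟩
  · dsimp only
    split_ifs with hxB
    · exact m.lt_succ_self
    · exact (hc.1 x (hS hx hxB)).trans m.lt_succ_self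
  · by_cases hxB : x ∈ B <;> by_cases hyB : y ∈ B <;> simp only [hxB, hyB, if_true, if_false]
    · exact absurd hxy (hB x hxB y hyB)
    · exact (hc.1 y (hS hy hyB)).ne'
    · exact (hc.1 x (hS hx hxB)).ne
    · exact hc.2 x (hS hx hxB) y (hS hy hyB) hxy

theorem IsProperColoringOn.update_of_dominates {a b : V} (hc : IsProperColoringOn G (S.erase a) k c)
    (hb : b ∈ S) (hab : a ≠ b) (hnadj : ¬ G.Adj a b) (hdom : Dominates G S b a) :
    IsProperColoringOn G S k (Function.update c a (c b)) := by
  have hb' : b ∈ S.erase a := mem_erase.mpr ⟨hab.symm, hb⟩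
  have key : ∀ y ∈ S, G.Adj a y → c b ≠ c y := fun y hy hay =>
    hc.2 b hb' y (mem_erase.mpr ⟨(G.ne_of_adj hay).symm, hy⟩)
      (hdom y hy (fun h => hnadj (h ▸ hay)) hay)
  refine ⟨fun x hx => ?_, fun x hx y hy hxy => ?_⟩
  · by_cases hxa : x = a
    · simpa [hxa] using hc.1 b hb'
    · simpa [hxa] using hc.1 x (mem_erase.mpr ⟨hxa, hx⟩)
  · by_cases hxa : x = a <;> by_cases hya : y = a
    · rw [hxa, hya] at hxy
      exact absurd hxy (G.loopless.irrefl a)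
    · rw [hxa] at hxy
      simpa [hxa, hya] using key y hy hxy
    · rw [hya] at hxy
      simpa [hxa, hya] using (key x hx hxy.symm).symm
    · simpa [hxa, hya] using
        hc.2 x (mem_erase.mpr ⟨hxa, hx⟩) y (mem_erase.mpr ⟨hya, hy⟩) hxy

theorem IsProperColoringOn.cliqueFreeOn_sdiff_colorClass {a b : V}
    (hk : G.CliqueFreeOn S (k + 1)) (hc : IsProperColoringOn G (S.erase a) k c) (hb : b ∈ S)
    (hab : a ≠ b) (hadj : G.Adj a b) (hdom : Dominates G S b a) :
    G.CliqueFreeOn ↑(S \ (S.erase a).filter (c · = c b)) k := by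
  intro t hts ht
  rw [coe_subset] at hts
  have hb' : b ∈ S.erase a := mem_erase.mpr ⟨hab.symm, hb⟩
  have htS : t ⊆ S := hts.trans sdiff_subset
  have hbt : b ∉ t := fun hbt => (mem_sdiff.mp (hts hbt)).2 (mem_filter.mpr ⟨hb', rfl⟩)
  by_cases hat : a ∈ t
  · refine hk (t := insert b t) (coe_subset.mpr (insert_subset hb htS)) (ht.insert fun z hz => ?_)
    rcases eq_or_ne z a with rfl | hza
    · exact hadj.symm
    · exact hdom z (htS hz) (ne_of_mem_of_not_mem hz hbt) (ht.1 hat hz (Ne.symm hza))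
  · obtain ⟨x, hxt, hx⟩ := hc.exists_mem_color_eq
      (fun x hx => mem_erase.mpr ⟨ne_of_mem_of_not_mem hx hat, htS hx⟩) ht (hc.1 b hb')
    exact (mem_sdiff.mp (hts hxt)).2
      (mem_filter.mpr ⟨mem_erase.mpr ⟨ne_of_mem_of_not_mem hxt hat, htS hxt⟩, hx⟩)

end Coloring

section Perfect

open SimpleGraph

variable {V : Type*} [DecidableEq V] {G : SimpleGraph V}

theorem exists_isProperColoringOn_of_dominates
    (hdom : ∀ T : Finset V, 1 < #T → ∃ a ∈ T, ∃ b ∈ T, a ≠ b ∧ Dominates G T b a)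
    (S : Finset V) (k : ℕ) (hk : G.CliqueFreeOn S (k + 1)) :
    ∃ c, IsProperColoringOn G S k c := by
  induction S using Finset.strongInduction generalizing k with
  | H S ih =>
  rcases le_or_gt #S 1 with hS | hS
  · exact ⟨0, isProperColoringOn_zero_of_card_le_one hS hk⟩
  obtain ⟨a, ha, b, hb, hab, hba⟩ := hdom S hS
  obtain ⟨c, hc⟩ :=
    ih (S.erase a) (erase_ssubset ha) k (hk.subset _ (coe_subset.mpr (erase_subset a S)))
  by_cases hadj : G.Adj a b
  · have hb' : b ∈ S.erase a := mem_erase.mpr ⟨hab.symm, hb⟩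
    obtain ⟨m, rfl⟩ : ∃ m, k = m + 1 := Nat.exists_eq_add_one.mpr (Nat.zero_lt_of_lt (hc.1 b hb'))
    set B := (S.erase a).filter (c · = c b)
    have hB : ∀ x ∈ B, ∀ y ∈ B, ¬ G.Adj x y := fun x hx y hy hxy =>
      hc.2 x (mem_filter.mp hx).1 y (mem_filter.mp hy).1 hxy
        ((mem_filter.mp hx).2.trans (mem_filter.mp hy).2.symm)
    have hB_ssub : S \ B ⊂ S :=
      sdiff_ssubset ((filter_subset _ _).trans (erase_subset a S)) ⟨b, mem_filter.mpr ⟨hb', rfl⟩⟩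
    obtain ⟨c', hc'⟩ := ih (S \ B) hB_ssub m (hc.cliqueFreeOn_sdiff_colorClass hk hb hab hadj hba)
    exact ⟨_, hc'.ite_of_independent hB⟩
  · exact ⟨_, hc.update_of_dominates hb hab hadj hba⟩

theorem chromaticNumber_induce_eq_cliqueNum_of_dominates [Finite V]
    (hdom : ∀ T : Finset V, 1 < #T → ∃ a ∈ T, ∃ b ∈ T, a ≠ b ∧ Dominates G T b a) (S : Set V) :
    (G.induce S).chromaticNumber = (G.induce S).cliqueNum := by
  refine le_antisymm ?_ cliqueNum_le_chromaticNumber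
  have hfree : G.CliqueFreeOn S.toFinite.toFinset ((G.induce S).cliqueNum + 1) := by
    rw [Set.Finite.coe_toFinset, ← cliqueFree_induce_iff]
    intro t ht
    have := ht.isClique.card_le_cliqueNum
    rw [ht.card_eq] at this
    omega
  obtain ⟨c, hc⟩ := exists_isProperColoringOn_of_dominates hdom _ _ hfree
  have hcol := hc.colorable
  rw [Set.Finite.coe_toFinset] at hcol
  exact hcol.chromaticNumber_le

end Perfect

/-- Every graph of twin-width at most 1 is perfect, i.e. every induced
subgraph has chromatic number equal to its clique number. -/
theorem stmt_1 {V : Type*} [Fintype V] [DecidableEq V] (G : SimpleGraph V)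
    (h : tww G ≤ 1) :
    ∀ S : Set V, (G.induce S).chromaticNumber = ((G.induce S).cliqueNum : ℕ∞) := by
  refine chromaticNumber_induce_eq_cliqueNum_of_dominates fun T hT => ?_
  obtain ⟨x, -⟩ := card_pos.mp (zero_lt_one.trans hT)
  have : Nonempty V := ⟨x⟩
  obtain ⟨C, hC⟩ := exists_isDSeq_of_tww_le G h
  exact hC.exists_dominates hT
end

section
/- Let G be a graph and let G_n, …, G_1 be a 1-contraction sequence of G. Then G is a permutation graph admitting a realiser (σ, τ) such that: (i) for every i and every vertex x of G_i, the part of x is an interval of (σ, τ); and (ii) for every red edge xy of G_i, the union of the parts of x and y is an interval for one of the two orderings σ, τ, and the part of x and the part of y are each intervals for the other ordering. -/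
open Finset

/-!
The two orderings are built from `G_1` down to `G_n` as integer position functions `f`, `g`,
constant on the parts of the current trigraph `G_i`, such that black edges are exactly the pairs
ordered oppositely by `f` and `g`. To pass from `G_i` to `G_{i+1}` the part `K ∪ Z` is split:
all positions are doubled and `Z` gets odd positions next to `K`, on the sides that realise the
edge or non-edge between `K` and `Z`. Since red degrees are at most one, `K ∪ Z` has at most one
red neighbour `q`, and `K` and `Z` may relate differently to `q`; then `Z` jumps over `q` in the
ordering in which `K ∪ Z` and `q` are adjacent. A jump only breaks intervals separating `K ∪ Z`
from `q`, and in a 1-sequence the only required ones are the red edges above `(K ∪ Z, q)`: these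
are all kept as interval pairs whose union is an interval of that same ordering, which is
consistent because a red edge has at most one red descendant in each finer trigraph.
-/

section Homogeneous

variable {V : Type*} {G : SimpleGraph V} {X Y X' Y' : Finset V}

lemma Homogeneous.symm (h : Homogeneous G X Y) : Homogeneous G Y X :=
  h.imp (fun h y hy x hx => (h x hx y hy).symm) (fun h y hy x hx hxy => h x hx y hy hxy.symm)

lemma Homogeneous.mono (hX : X' ⊆ X) (hY : Y' ⊆ Y) (h : Homogeneous G X Y) :
    Homogeneous G X' Y' :=
  h.imp (fun h x hx y hy => h x (hX hx) y (hY hy)) (fun h x hx y hy => h x (hX hx) y (hY hy))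

lemma Homogeneous.adj_iff (h : Homogeneous G X Y) {u w a b : V} (hu : u ∈ X) (hw : w ∈ Y)
    (ha : a ∈ X) (hb : b ∈ Y) : G.Adj u w ↔ G.Adj a b := by
  rcases h with h | h
  · exact iff_of_true (h u hu w hw) (h a ha b hb)
  · exact iff_of_false (h u hu w hw) (h a ha b hb)

lemma Homogeneous.union [DecidableEq V] {Z : Finset V} (hX : Homogeneous G X Y)
    (hZ : Homogeneous G Z Y) {x z y : V} (hx : x ∈ X) (hz : z ∈ Z) (hy : y ∈ Y)
    (h : G.Adj x y ↔ G.Adj z y) : Homogeneous G (X ∪ Z) Y := by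
  rcases hX with hX | hX <;> rcases hZ with hZ | hZ
  · exact Or.inl fun u hu w hw => (mem_union.1 hu).elim (hX u · w hw) (hZ u · w hw)
  · exact absurd (h.1 (hX x hx y hy)) (hZ z hz y hy)
  · exact absurd (h.2 (hZ z hz y hy)) (hX x hx y hy)
  · exact Or.inr fun u hu w hw => (mem_union.1 hu).elim (hX u · w hw) (hZ u · w hw)

end Homogeneous

/-! ### Orderings by integer positions -/

section Intervals

variable {V : Type*}

def IsIntervalBy (f : V → ℤ) (S : Finset V) : Prop :=
  ∀ ⦃a b w⦄, a ∈ S → b ∈ S → f a ≤ f w → f w ≤ f b → w ∈ S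

def Crosses (f g : V → ℤ) (u w : V) : Prop :=
  (f u < f w ∧ g w < g u) ∨ (f w < f u ∧ g u < g w)

lemma IsIntervalBy.neg {f : V → ℤ} {S : Finset V} (h : IsIntervalBy f S) :
    IsIntervalBy (-f) S := fun _ _ _ ha hb h₁ h₂ =>
  h hb ha (neg_le_neg_iff.1 h₂) (neg_le_neg_iff.1 h₁)

lemma crosses_comm {f g : V → ℤ} {u w : V} : Crosses f g u w ↔ Crosses f g w u :=
  Or.comm

lemma crosses_neg {f g : V → ℤ} {u w : V} : Crosses (-f) (-g) u w ↔ Crosses f g u w := by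
  simp only [Crosses, Pi.neg_apply, neg_lt_neg_iff]
  exact Or.comm

lemma crosses_swap {f g : V → ℤ} {u w : V} : Crosses g f u w ↔ Crosses f g u w := by
  simp only [Crosses]
  tauto

lemma compare_eq_compare {x y x' y' : ℤ} (h₁ : x < y ↔ x' < y') (h₂ : y < x ↔ y' < x') :
    compare x y = compare x' y' := by
  rcases lt_trichotomy x' y' with h | h | h
  · rw [compare_lt_iff_lt.2 h, compare_lt_iff_lt.2 (h₁.2 h)]
  · rw [compare_eq_iff_eq.2 h, compare_eq_iff_eq]
    omega
  · rw [compare_gt_iff_gt.2 h, compare_gt_iff_gt.2 (h₂.2 h)]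

lemma crosses_congr {f g f' g' : V → ℤ} {u w : V}
    (hf : compare (f' u) (f' w) = compare (f u) (f w))
    (hg : compare (g' u) (g' w) = compare (g u) (g w)) :
    Crosses f' g' u w ↔ Crosses f g u w := by
  have lt_iff {f f' : V → ℤ} (h : compare (f' u) (f' w) = compare (f u) (f w)) :
      (f' u < f' w ↔ f u < f w) ∧ (f' w < f' u ↔ f w < f u) := by
    exact ⟨by rw [← compare_lt_iff_lt, h, compare_lt_iff_lt],
      by rw [← compare_gt_iff_gt, h, compare_gt_iff_gt]⟩
  simp only [Crosses, (lt_iff hf).1, (lt_iff hf).2, (lt_iff hg).1, (lt_iff hg).2]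

lemma IsIntervalBy.compare_eq {f : V → ℤ} {S : Finset V} (hS : IsIntervalBy f S) {a b w : V}
    (ha : a ∈ S) (hb : b ∈ S) (hw : w ∉ S) : compare (f a) (f w) = compare (f b) (f w) := by
  have h₁ : ¬ (f a ≤ f w ∧ f w ≤ f b) := fun h => hw (hS ha hb h.1 h.2)
  have h₂ : ¬ (f b ≤ f w ∧ f w ≤ f a) := fun h => hw (hS hb ha h.1 h.2)
  exact compare_eq_compare (by omega) (by omega)

lemma IsIntervalBy.ne {f : V → ℤ} {S : Finset V} (hS : IsIntervalBy f S) {a w : V} (ha : a ∈ S)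
    (hw : w ∉ S) : f a ≠ f w :=
  fun h => hw (hS ha ha h.le h.ge)

lemma exists_odd_adjacent_lt_iff (x : ℤ) (P : Prop) :
    ∃ v, (v = 2 * x + 1 ∨ v = 2 * x - 1) ∧ (v < 2 * x ↔ P) := by
  by_cases h : P
  · exact ⟨2 * x - 1, Or.inr rfl, iff_of_true (by omega) h⟩
  · exact ⟨2 * x + 1, Or.inl rfl, iff_of_false (by omega) h⟩

variable [DecidableEq V]

def IsIntervalPair (c o : V → ℤ) (S T : Finset V) : Prop :=
  IsIntervalBy c (S ∪ T) ∧ IsIntervalBy o S ∧ IsIntervalBy o T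

lemma IsIntervalPair.neg {c o : V → ℤ} {S T : Finset V} (h : IsIntervalPair c o S T) :
    IsIntervalPair (-c) (-o) S T :=
  ⟨h.1.neg, h.2.1.neg, h.2.2.neg⟩

lemma IsIntervalPair.symm {c o : V → ℤ} {S T : Finset V}
    (h : IsIntervalPair c o S T) : IsIntervalPair c o T S :=
  ⟨union_comm S T ▸ h.1, h.2.2, h.2.1⟩

/-- All positions outside `Z` are doubled, so an odd `v = 2 * f a ± 1` lands right next to `a`. -/
def moveTo (f : V → ℤ) (Z : Finset V) (v : ℤ) : V → ℤ := fun u => if u ∈ Z then v else 2 * f u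

lemma moveTo_of_mem {f : V → ℤ} {Z : Finset V} {v : ℤ} {u : V} (hu : u ∈ Z) :
    moveTo f Z v u = v := if_pos hu

lemma moveTo_of_not_mem {f : V → ℤ} {Z : Finset V} {v : ℤ} {u : V} (hu : u ∉ Z) :
    moveTo f Z v u = 2 * f u := if_neg hu

lemma compare_moveTo_of_not_mem {f : V → ℤ} {Z : Finset V} {v : ℤ} {u w : V} (hu : u ∉ Z)
    (hw : w ∉ Z) : compare (moveTo f Z v u) (moveTo f Z v w) = compare (f u) (f w) := by
  rw [moveTo_of_not_mem hu, moveTo_of_not_mem hw]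
  exact compare_eq_compare (by omega) (by omega)

lemma compare_moveTo_of_mem {f : V → ℤ} {Z : Finset V} {v : ℤ} {a u w : V} (hu : u ∈ Z)
    (hw : w ∉ Z) (hv : v = 2 * f a + 1 ∨ v = 2 * f a - 1) (hne : f a ≠ f w) :
    compare (moveTo f Z v u) (moveTo f Z v w) = compare (f a) (f w) := by
  rw [moveTo_of_mem hu, moveTo_of_not_mem hw]
  exact compare_eq_compare (by omega) (by omega)

lemma IsIntervalBy.moveTo_of_mem_iff {f : V → ℤ} {S Z : Finset V} {v : ℤ} {a : V}
    (hS : IsIntervalBy f S) (hv : v = 2 * f a + 1 ∨ v = 2 * f a - 1) (hZ : ∀ z ∈ Z, z ∈ S ↔ a ∈ S) :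
    IsIntervalBy (moveTo f Z v) S := by
  intro x y w hx hy h₁ h₂
  by_cases hw : w ∈ Z
  · rw [hZ w hw]
    by_contra ha
    have hx' : x ∉ Z := fun h => ha ((hZ x h).1 hx)
    have hy' : y ∉ Z := fun h => ha ((hZ y h).1 hy)
    rw [moveTo_of_not_mem hx', moveTo_of_mem hw] at h₁
    rw [moveTo_of_not_mem hy', moveTo_of_mem hw] at h₂
    exact ha (hS hx hy (by omega) (by omega))
  · rw [moveTo_of_not_mem hw] at h₁ h₂
    have below : ∃ x' ∈ S, f x' ≤ f w := by
      by_cases hxZ : x ∈ Z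
      · rw [moveTo_of_mem hxZ] at h₁
        exact ⟨a, (hZ x hxZ).1 hx, by omega⟩
      · rw [moveTo_of_not_mem hxZ] at h₁
        exact ⟨x, hx, by omega⟩
    have above : ∃ y' ∈ S, f w ≤ f y' := by
      by_cases hyZ : y ∈ Z
      · rw [moveTo_of_mem hyZ] at h₂
        exact ⟨a, (hZ y hyZ).1 hy, by omega⟩
      · rw [moveTo_of_not_mem hyZ] at h₂
        exact ⟨y, hy, by omega⟩
    obtain ⟨x', hx', hxw⟩ := below
    obtain ⟨y', hy', hwy⟩ := above
    exact hS hx' hy' hxw hwy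

lemma IsIntervalBy.moveTo_of_disjoint {f : V → ℤ} {S Z : Finset V} {v : ℤ}
    (hS : IsIntervalBy f (S ∪ Z)) (hSZ : Disjoint S Z)
    (hv : (∀ u ∈ S, v < 2 * f u) ∨ (∀ u ∈ S, 2 * f u < v)) : IsIntervalBy (moveTo f Z v) S := by
  intro x y w hx hy h₁ h₂
  rw [moveTo_of_not_mem (disjoint_left.1 hSZ hx)] at h₁
  rw [moveTo_of_not_mem (disjoint_left.1 hSZ hy)] at h₂
  by_cases hw : w ∈ Z
  · rw [moveTo_of_mem hw] at h₁ h₂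
    rcases hv with hv | hv
    · exact absurd (hv x hx) (by omega)
    · exact absurd (hv y hy) (by omega)
  · rw [moveTo_of_not_mem hw] at h₁ h₂
    have := hS (w := w) (mem_union_left _ hx) (mem_union_left _ hy) (by omega) (by omega)
    exact (mem_union.1 this).resolve_right hw

end Intervals

section Partition

variable {V : Type*} [Fintype V] [DecidableEq V] {P Q : Finpartition (univ : Finset V)}

def IsLabelling (P : Finpartition (univ : Finset V)) (f : V → ℤ) : Prop :=
  ∀ u w, f u = f w ↔ P.part u = P.part w

def IsSaturated (P : Finpartition (univ : Finset V)) (S : Finset V) : Prop :=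
  ∀ ⦃u w⦄, P.part u = P.part w → u ∈ S → w ∈ S

lemma mem_part_self (P : Finpartition (univ : Finset V)) (u : V) : u ∈ P.part u :=
  P.mem_part (mem_univ u)

lemma part_mem_parts (P : Finpartition (univ : Finset V)) (u : V) : P.part u ∈ P.parts :=
  P.part_mem.2 (mem_univ u)

lemma IsLabelling.neg {f : V → ℤ} (hf : IsLabelling P f) : IsLabelling P (-f) := fun u w => by
  simpa using hf u w

lemma IsLabelling.isIntervalBy {f : V → ℤ} {S : Finset V} (hf : IsLabelling P f)
    (hS : S ∈ P.parts) : IsIntervalBy f S := by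
  intro a b w ha hb h₁ h₂
  have hab : f a = f b := (hf a b).2 (by rw [P.part_eq_of_mem hS ha, P.part_eq_of_mem hS hb])
  rw [← P.part_eq_of_mem hS ha, ← (hf w a).1 (by omega)]
  exact mem_part_self P w

lemma IsLabelling.crosses_iff {f g : V → ℤ} (hf : IsLabelling P f) (hg : IsLabelling P g)
    {u w u' w' : V} (hu : P.part u = P.part u') (hw : P.part w = P.part w') :
    Crosses f g u w ↔ Crosses f g u' w' := by
  simp only [Crosses, (hf u u').2 hu, (hf w w').2 hw, (hg u u').2 hu, (hg w w').2 hw]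

lemma IsLabelling.adj_iff_crosses {G : SimpleGraph V} {f g : V → ℤ} (hf : IsLabelling P f)
    (hg : IsLabelling P g) {X Y : Finset V} (hX : X ∈ P.parts) (hY : Y ∈ P.parts)
    (hXY : Homogeneous G X Y) {x y : V} (hx : x ∈ X) (hy : y ∈ Y)
    (h : G.Adj x y ↔ Crosses f g x y) : ∀ u ∈ X, ∀ w ∈ Y, G.Adj u w ↔ Crosses f g u w :=
  fun u hu w hw => by
    rw [hXY.adj_iff hu hw hx hy, hf.crosses_iff hg ((P.part_eq_of_mem hX hu).trans
      (P.part_eq_of_mem hX hx).symm) ((P.part_eq_of_mem hY hw).trans (P.part_eq_of_mem hY hy).symm)]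
    exact h

lemma IsSaturated.of_le (hPQ : P ≤ Q) {S : Finset V} (hS : S ∈ Q.parts) : IsSaturated P S := by
  intro u w huw hu
  obtain ⟨T, hT, hPT⟩ := hPQ (part_mem_parts P u)
  obtain rfl : T = S := Q.eq_of_mem_parts hT hS (hPT (mem_part_self P u)) hu
  exact hPT (huw ▸ mem_part_self P w)

lemma IsSaturated.union {S T : Finset V} (hS : IsSaturated P S) (hT : IsSaturated P T) :
    IsSaturated P (S ∪ T) := fun _ _ huw hu => by
  rcases mem_union.1 hu with h | h
  exacts [mem_union_left _ (hS huw h), mem_union_right _ (hT huw h)]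

lemma IsSaturated.mem_iff {S : Finset V} (hS : IsSaturated P S) {u w : V}
    (huw : P.part u = P.part w) : u ∈ S ↔ w ∈ S :=
  ⟨hS huw, hS huw.symm⟩

lemma IsSaturated.subset {S U : Finset V} (hS : IsSaturated P S) (hU : U ∈ P.parts) {u : V}
    (hu : u ∈ U) (huS : u ∈ S) : U ⊆ S := fun _ hw =>
  hS ((P.part_eq_of_mem hU hu).trans (P.part_eq_of_mem hU hw).symm) huS

lemma Finpartition.eq_of_subset_of_mem_parts {α : Type*} [DecidableEq α] {s A B : Finset α}
    (P : Finpartition s) (hA : A ∈ P.parts) (hB : B ∈ P.parts) (hAB : A ⊆ B) : A = B :=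
  P.disjoint.eq_of_le hA hB (P.ne_bot hA) hAB

lemma Finpartition.ne_of_disjoint {α : Type*} [DecidableEq α] {s U W : Finset α}
    (P : Finpartition s) (hU : U ∈ P.parts) (hd : Disjoint U W) : U ≠ W := by
  obtain ⟨x, hx⟩ := P.nonempty_of_mem_parts hU
  rintro rfl
  exact disjoint_left.1 hd hx hx

end Partition

/-! ### Contraction sequences -/

namespace ContractionSeq

variable {V : Type*} [Fintype V] [DecidableEq V] {G : SimpleGraph V} {C : ContractionSeq V}
  {i j : ℕ} {f g c o : V → ℤ} {K Z Q S T A B X Y p q : Finset V} {a b : V} {vf vg : ℤ}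

/-- `G_i` arises from `G_{i+1}` by contracting the parts `K` and `Z`. -/
structure Split (C : ContractionSeq V) (i : ℕ) (K Z : Finset V) : Prop where
  left_mem : K ∈ (C.parts (i + 1)).parts
  right_mem : Z ∈ (C.parts (i + 1)).parts
  ne : K ≠ Z
  parts_eq : (C.parts i).parts = insert (K ∪ Z) ((((C.parts (i + 1)).parts).erase K).erase Z)

lemma exists_split (C : ContractionSeq V) {i : ℕ} (h₁ : 1 ≤ i)
    (h₂ : i < Fintype.card V) : ∃ K Z, Split C i K Z := by
  obtain ⟨K, hK, Z, hZ, hKZ, h⟩ := C.merge i h₁ h₂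
  exact ⟨K, Z, hK, hZ, hKZ, h⟩

namespace Split

lemma symm (h : Split C i K Z) : Split C i Z K :=
  ⟨h.right_mem, h.left_mem, h.ne.symm, by rw [h.parts_eq, union_comm, erase_right_comm]⟩

lemma union_mem (h : Split C i K Z) : K ∪ Z ∈ (C.parts i).parts := by
  rw [h.parts_eq]
  exact mem_insert_self _ _

lemma disjoint (h : Split C i K Z) : Disjoint K Z :=
  (C.parts (i + 1)).disjoint h.left_mem h.right_mem h.ne

lemma mem_succ (h : Split C i K Z) {U : Finset V} (hU : U ∈ (C.parts i).parts)
    (hne : U ≠ K ∪ Z) : U ∈ (C.parts (i + 1)).parts := by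
  rw [h.parts_eq, mem_insert] at hU
  exact mem_of_mem_erase (mem_of_mem_erase (hU.resolve_left hne))

lemma part_of_mem (h : Split C i K Z) {u : V} (hu : u ∈ K ∪ Z) :
    (C.parts i).part u = K ∪ Z :=
  (C.parts i).part_eq_of_mem h.union_mem hu

lemma part_succ (h : Split C i K Z) (u : V) : (C.parts (i + 1)).part u =
    if u ∈ Z then Z else if u ∈ K then K else (C.parts i).part u := by
  split_ifs with hZ hK
  · exact (C.parts (i + 1)).part_eq_of_mem h.right_mem hZ
  · exact (C.parts (i + 1)).part_eq_of_mem h.left_mem hK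
  · refine (C.parts (i + 1)).part_eq_of_mem (h.mem_succ (part_mem_parts _ u) fun he => ?_)
      (mem_part_self _ u)
    have := he ▸ mem_part_self (C.parts i) u
    rcases mem_union.1 this with h' | h' <;> contradiction

lemma mem_succ_cases (h : Split C i K Z) {U : Finset V} (hU : U ∈ (C.parts (i + 1)).parts) :
    U = K ∨ U = Z ∨ (U ∈ (C.parts i).parts ∧ Disjoint U (K ∪ Z)) := by
  by_cases hUK : U = K
  · exact Or.inl hUK
  by_cases hUZ : U = Z
  · exact Or.inr (Or.inl hUZ)
  refine Or.inr (Or.inr ⟨?_, disjoint_union_right.2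
    ⟨(C.parts _).disjoint hU h.left_mem hUK, (C.parts _).disjoint hU h.right_mem hUZ⟩⟩)
  rw [h.parts_eq]
  exact mem_insert_of_mem (mem_erase.2 ⟨hUZ, mem_erase.2 ⟨hUK, hU⟩⟩)

lemma isLabelling_moveTo (h : Split C i K Z) {f : V → ℤ} {v : ℤ}
    (hf : IsLabelling (C.parts i) f) (hv : ∀ x, v ≠ 2 * x) :
    IsLabelling (C.parts (i + 1)) (moveTo f Z v) := by
  have hp : ∀ {u}, u ∈ K → (C.parts i).part u = K ∪ Z :=
    fun hu => h.part_of_mem (mem_union_left _ hu)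
  have hnp : ∀ {u}, u ∉ Z → u ∉ K → (C.parts i).part u ≠ K ∪ Z := fun hZ hK he => by
    rcases mem_union.1 (he ▸ mem_part_self (C.parts i) _) with h' | h' <;> contradiction
  intro u w
  rw [h.part_succ u, h.part_succ w]
  by_cases hu : u ∈ Z <;> by_cases hw : w ∈ Z
  · simp only [moveTo_of_mem hu, moveTo_of_mem hw, if_pos hu, if_pos hw]
  · rw [moveTo_of_mem hu, moveTo_of_not_mem hw, if_pos hu, if_neg hw]
    refine iff_of_false (hv _) ?_
    split_ifs with hwK
    exacts [h.ne.symm, fun he => hw (he ▸ mem_part_self _ w)]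
  · rw [moveTo_of_not_mem hu, moveTo_of_mem hw, if_neg hu, if_pos hw]
    refine iff_of_false (fun he => hv _ he.symm) ?_
    split_ifs with huK
    exacts [h.ne, fun he => hu (he.symm ▸ mem_part_self _ u)]
  · rw [moveTo_of_not_mem hu, moveTo_of_not_mem hw, if_neg hu, if_neg hw,
      show 2 * f u = 2 * f w ↔ f u = f w by omega, hf u w]
    by_cases huK : u ∈ K <;> by_cases hwK : w ∈ K
    · simp only [if_pos huK, if_pos hwK, (hp huK).trans (hp hwK).symm]
    · rw [if_pos huK, if_neg hwK]
      exact iff_of_false (fun he => hnp hw hwK (he.symm.trans (hp huK)))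
        (fun he => hwK (he ▸ mem_part_self _ w))
    · rw [if_neg huK, if_pos hwK]
      exact iff_of_false (fun he => hnp hu huK (he.trans (hp hwK)))
        (fun he => huK (he.symm ▸ mem_part_self _ u))
    · rw [if_neg huK, if_neg hwK]

lemma le (h : Split C i K Z) : C.parts (i + 1) ≤ C.parts i := by
  intro U hU
  by_cases hUK : U = K
  · exact ⟨K ∪ Z, h.union_mem, hUK ▸ subset_union_left⟩
  by_cases hUZ : U = Z
  · exact ⟨K ∪ Z, h.union_mem, hUZ ▸ subset_union_right⟩
  refine ⟨U, ?_, le_rfl⟩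
  rw [h.parts_eq]
  exact mem_insert_of_mem (mem_erase.2 ⟨hUZ, mem_erase.2 ⟨hUK, hU⟩⟩)

end Split

lemma parts_le (C : ContractionSeq V) {i j : ℕ} (hj : 1 ≤ j) (hji : j ≤ i)
    (hi : i ≤ Fintype.card V) : C.parts i ≤ C.parts j := by
  induction i, hji using Nat.le_induction with
  | base => exact le_rfl
  | succ i hji ih =>
    obtain ⟨K, Z, hs⟩ := C.exists_split (by omega) hi
    exact hs.le.trans (ih (by omega))

/-! ### Red edges of a 1-sequence -/

def IsRedEdge (C : ContractionSeq V) (G : SimpleGraph V) (i : ℕ) (S T : Finset V) : Prop :=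
  S ∈ (C.parts i).parts ∧ T ∈ (C.parts i).parts ∧ S ≠ T ∧ ¬ Homogeneous G S T

lemma IsRedEdge.symm (h : C.IsRedEdge G i S T) : C.IsRedEdge G i T S :=
  ⟨h.2.1, h.1, h.2.2.1.symm, fun h' => h.2.2.2 h'.symm⟩

lemma IsRedEdge.lift (h : C.IsRedEdge G i A B) (hS : S ∈ (C.parts j).parts)
    (hT : T ∈ (C.parts j).parts) (hAS : A ⊆ S) (hBT : B ⊆ T) (hST : S ≠ T) :
    C.IsRedEdge G j S T :=
  ⟨hS, hT, hST, fun h' => h.2.2.2 (h'.mono hAS hBT)⟩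

lemma exists_superset (C : ContractionSeq V) (hj : 1 ≤ j) (hji : j ≤ i)
    (hi : i ≤ Fintype.card V) (hA : A ∈ (C.parts i).parts) : ∃ S ∈ (C.parts j).parts, A ⊆ S :=
  C.parts_le hj hji hi hA

lemma isSaturated_of_mem (C : ContractionSeq V) (hj : 1 ≤ j) (hji : j ≤ i)
    (hi : i ≤ Fintype.card V) (hS : S ∈ (C.parts j).parts) : IsSaturated (C.parts i) S :=
  IsSaturated.of_le (C.parts_le hj hji hi) hS

lemma red_unique (hC : IsDSeq G C 1) (h₁ : 1 ≤ i) (h₂ : i ≤ Fintype.card V) {T' : Finset V}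
    (h : C.IsRedEdge G i S T) (h' : C.IsRedEdge G i S T') : T = T' :=
  ((Set.ncard_le_one).1 (hC i h₁ h₂ S h.1)) T ⟨h.2.1, h.2.2.1.symm, h.2.2.2⟩
    T' ⟨h'.2.1, h'.2.2.1.symm, h'.2.2.2⟩

lemma subset_of_forall_not_isRedEdge (hj : 1 ≤ j) (hji : j ≤ i) (hi : i ≤ Fintype.card V)
    (hS : S ∈ (C.parts j).parts) (hnr : ∀ T, ¬ C.IsRedEdge G j S T)
    (hAB : C.IsRedEdge G i A B) (hAS : A ⊆ S) : B ⊆ S := by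
  obtain ⟨W, hW, hBW⟩ := C.exists_superset hj hji hi hAB.2.1
  by_contra hBS
  exact hnr W (hAB.lift hS hW hAS hBW fun h => hBS (h ▸ hBW))

lemma subset_or_subset_of_isRedEdge (hC : IsDSeq G C 1) (hj : 1 ≤ j) (hji : j ≤ i)
    (hi : i ≤ Fintype.card V) (hAB : C.IsRedEdge G i A B) (hST : C.IsRedEdge G j S T)
    (hAS : A ⊆ S) : B ⊆ S ∨ B ⊆ T := by
  obtain ⟨W, hW, hBW⟩ := C.exists_superset hj hji hi hAB.2.1
  by_cases hWS : W = S
  · exact Or.inl (hWS ▸ hBW)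
  · rw [red_unique hC hj (hji.trans hi) hST (hAB.lift hST.1 hW hAS hBW (Ne.symm hWS))]
    exact Or.inr hBW

lemma mem_iff_of_forall_not_isRedEdge (hj : 1 ≤ j) (hji : j ≤ i) (hi : i ≤ Fintype.card V)
    (hS : S ∈ (C.parts j).parts) (hnr : ∀ T, ¬ C.IsRedEdge G j S T)
    (hAB : C.IsRedEdge G i A B) {x y : V} (hx : x ∈ A) (hy : y ∈ B) : x ∈ S ↔ y ∈ S := by
  have hsat := C.isSaturated_of_mem hj hji hi hS
  exact ⟨fun h => subset_of_forall_not_isRedEdge hj hji hi hS hnr hAB (hsat.subset hAB.1 hx h) hy,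
    fun h => subset_of_forall_not_isRedEdge hj hji hi hS hnr hAB.symm (hsat.subset hAB.2.1 hy h) hx⟩

lemma mem_iff_or_subset (hC : IsDSeq G C 1) (hj : 1 ≤ j) (hji : j ≤ i)
    (hi : i ≤ Fintype.card V) (hST : C.IsRedEdge G j S T) (hAB : C.IsRedEdge G i A B) {x y : V}
    (hx : x ∈ A) (hy : y ∈ B) :
    ((x ∈ S ↔ y ∈ S) ∧ (x ∈ T ↔ y ∈ T)) ∨ (A ⊆ S ∧ B ⊆ T) ∨ (B ⊆ S ∧ A ⊆ T) := by
  have sat := fun {U} (hU : U ∈ (C.parts j).parts) => C.isSaturated_of_mem hj hji hi hU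
  have disj := disjoint_left.1 ((C.parts j).disjoint hST.1 hST.2.1 hST.2.2.1)
  have side : ∀ {S T A B x y}, C.IsRedEdge G j S T → C.IsRedEdge G i A B → x ∈ A → y ∈ B →
      x ∈ S → y ∈ S ∨ B ⊆ T := fun hST hAB hx hy hxS =>
    (subset_or_subset_of_isRedEdge hC hj hji hi hAB hST
      ((sat hST.1).subset hAB.1 hx hxS)).imp (fun h => h hy) id
  by_cases hxS : x ∈ S
  · rcases side hST hAB hx hy hxS with hyS | hBT
    · exact Or.inl ⟨iff_of_true hxS hyS, iff_of_false (disj hxS) (disj hyS)⟩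
    · exact Or.inr (Or.inl ⟨(sat hST.1).subset hAB.1 hx hxS, hBT⟩)
  by_cases hxT : x ∈ T
  · rcases side hST.symm hAB hx hy hxT with hyT | hBS
    · exact Or.inl ⟨iff_of_false hxS fun hyS => disj hyS hyT, iff_of_true hxT hyT⟩
    · exact Or.inr (Or.inr ⟨hBS, (sat hST.2.1).subset hAB.1 hx hxT⟩)
  have hyS : y ∉ S := fun hyS =>
    (side hST hAB.symm hy hx hyS).elim hxS fun hAT => hxT (hAT hx)
  have hyT : y ∉ T := fun hyT =>
    (side hST.symm hAB.symm hy hx hyT).elim hxT fun hAS => hxS (hAS hx)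
  exact Or.inl ⟨iff_of_false hxS hyS, iff_of_false hxT hyT⟩

lemma exists_parent_isRedEdge (hj : 1 ≤ j) (hji : j ≤ i) (hi : i < Fintype.card V)
    (hST : C.IsRedEdge G j S T) (h : C.IsRedEdge G (i + 1) A B) (hA : A ⊆ S) (hB : B ⊆ T) :
    ∃ A₀ B₀, C.IsRedEdge G i A₀ B₀ ∧ A ⊆ A₀ ∧ B ⊆ B₀ ∧ A₀ ⊆ S ∧ B₀ ⊆ T := by
  obtain ⟨A₀, hA₀, hAA₀⟩ := C.exists_superset (by omega) (Nat.le_succ i) hi h.1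
  obtain ⟨B₀, hB₀, hBB₀⟩ := C.exists_superset (by omega) (Nat.le_succ i) hi h.2.1
  obtain ⟨a, ha⟩ := (C.parts _).nonempty_of_mem_parts h.1
  obtain ⟨b, hb⟩ := (C.parts _).nonempty_of_mem_parts h.2.1
  have hA₀S := (C.isSaturated_of_mem hj hji hi.le hST.1).subset hA₀ (hAA₀ ha) (hA ha)
  have hB₀T := (C.isSaturated_of_mem hj hji hi.le hST.2.1).subset hB₀ (hBB₀ hb) (hB hb)
  have hne : A₀ ≠ B₀ := fun he => disjoint_left.1
    ((C.parts j).disjoint hST.1 hST.2.1 hST.2.2.1) (hA₀S (hAA₀ ha)) (hB₀T (he ▸ hAA₀ ha))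
  exact ⟨A₀, B₀, h.lift hA₀ hB₀ hAA₀ hBB₀ hne, hAA₀, hBB₀, hA₀S, hB₀T⟩

lemma red_descendant_unique (hC : IsDSeq G C 1) (hj : 1 ≤ j) (hji : j ≤ i)
    (hi : i ≤ Fintype.card V) (hST : C.IsRedEdge G j S T) {A' B' : Finset V}
    (h : C.IsRedEdge G i A B) (h' : C.IsRedEdge G i A' B') (hA : A ⊆ S) (hB : B ⊆ T)
    (hA' : A' ⊆ S) (hB' : B' ⊆ T) : A = A' ∧ B = B' := by
  induction i, hji using Nat.le_induction generalizing A B A' B' with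
  | base =>
    have eq := fun {U W} (hU : U ∈ (C.parts j).parts) hW =>
      (C.parts j).eq_of_subset_of_mem_parts (B := W) hU hW
    rw [eq h.1 hST.1 hA, eq h.2.1 hST.2.1 hB, eq h'.1 hST.1 hA', eq h'.2.1 hST.2.1 hB']
    exact ⟨rfl, rfl⟩
  | succ i hji ih =>
    have hi' : i ≤ Fintype.card V := by omega
    obtain ⟨K, Z, hs⟩ := C.exists_split (by omega) hi
    obtain ⟨A₀, B₀, h₀, hAA₀, hBB₀, hA₀S, hB₀T⟩ := exists_parent_isRedEdge hj hji hi hST h hA hB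
    obtain ⟨A₀', B₀', h₀', hAA₀', hBB₀', hA₀S', hB₀T'⟩ :=
      exists_parent_isRedEdge hj hji hi hST h' hA' hB'
    obtain ⟨rfl, rfl⟩ := ih hi' h₀ h₀' hA₀S hB₀T hA₀S' hB₀T'
    have eq : ∀ {U W}, U ∈ (C.parts (i + 1)).parts → W ∈ (C.parts i).parts → W ≠ K ∪ Z →
        U ⊆ W → U = W := fun hU hW hne =>
      (C.parts _).eq_of_subset_of_mem_parts hU (hs.mem_succ hW hne)
    -- Only one of the parents `A₀`, `B₀` is split; the other has red degree at most one.
    by_cases hA₀ : A₀ = K ∪ Z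
    · have hB₀ : B₀ ≠ K ∪ Z := hA₀ ▸ h₀.2.2.1.symm
      obtain rfl : B = B' := (eq h.2.1 h₀.2.1 hB₀ hBB₀).trans (eq h'.2.1 h₀.2.1 hB₀ hBB₀').symm
      exact ⟨red_unique hC (by omega) hi h.symm h'.symm, rfl⟩
    · obtain rfl : A = A' := (eq h.1 h₀.1 hA₀ hAA₀).trans (eq h'.1 h₀.1 hA₀ hAA₀').symm
      exact ⟨rfl, red_unique hC (by omega) hi h h'⟩

def IntervalPairsAbove (C : ContractionSeq V) (G : SimpleGraph V) (i : ℕ) (c o : V → ℤ)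
    (p q : Finset V) : Prop :=
  ∀ j, 1 ≤ j → j ≤ i → ∀ S T, C.IsRedEdge G j S T → p ⊆ S → q ⊆ T → IsIntervalPair c o S T

lemma IntervalPairsAbove.symm (h : C.IntervalPairsAbove G i c o p q) :
    C.IntervalPairsAbove G i c o q p :=
  fun j hj hji S T hST hqS hpT => (h j hj hji T S hST.symm hpT hqS).symm

lemma IntervalPairsAbove.neg (h : C.IntervalPairsAbove G i c o p q) :
    C.IntervalPairsAbove G i (-c) (-o) p q :=
  fun j hj hji S T hST hpS hqT => (h j hj hji S T hST hpS hqT).neg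

lemma IntervalPairsAbove.isIntervalPair (h : C.IntervalPairsAbove G i c o p q) (hi : 1 ≤ i)
    (hpq : C.IsRedEdge G i p q) : IsIntervalPair c o p q :=
  h i hi le_rfl p q hpq subset_rfl subset_rfl

/-! ### The invariant and one refinement step -/

/-- The two orderings at the resolution of `G_i`: positions are constant on the parts of `G_i`. -/
structure LevelRealiser (C : ContractionSeq V) (G : SimpleGraph V) (i : ℕ) (f g : V → ℤ) :
    Prop where
  labelling_fst : IsLabelling (C.parts i) f
  labelling_snd : IsLabelling (C.parts i) g
  adj_iff_crosses : ∀ u w, (C.parts i).part u ≠ (C.parts i).part w →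
    Homogeneous G ((C.parts i).part u) ((C.parts i).part w) → (G.Adj u w ↔ Crosses f g u w)
  isIntervalBy_of_noRed : ∀ j, 1 ≤ j → j ≤ i → ∀ S ∈ (C.parts j).parts,
    (∀ T, ¬ C.IsRedEdge G j S T) → IsIntervalBy f S ∧ IsIntervalBy g S
  isIntervalPair : ∀ j, 1 ≤ j → j ≤ i → ∀ S T, C.IsRedEdge G j S T →
    IsIntervalPair f g S T ∨ IsIntervalPair g f S T
  intervalPairsAbove : ∀ p q, C.IsRedEdge G i p q →
    C.IntervalPairsAbove G i f g p q ∨ C.IntervalPairsAbove G i g f p q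

namespace LevelRealiser

lemma swap (h : C.LevelRealiser G i f g) : C.LevelRealiser G i g f where
  labelling_fst := h.labelling_snd
  labelling_snd := h.labelling_fst
  adj_iff_crosses u w hne hhom := (h.adj_iff_crosses u w hne hhom).trans crosses_swap.symm
  isIntervalBy_of_noRed j hj hji S hS hnr := (h.isIntervalBy_of_noRed j hj hji S hS hnr).symm
  isIntervalPair j hj hji S T hST := (h.isIntervalPair j hj hji S T hST).symm
  intervalPairsAbove p q hpq := (h.intervalPairsAbove p q hpq).symm

lemma neg (h : C.LevelRealiser G i f g) : C.LevelRealiser G i (-f) (-g) where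
  labelling_fst := h.labelling_fst.neg
  labelling_snd := h.labelling_snd.neg
  adj_iff_crosses u w hne hhom := (h.adj_iff_crosses u w hne hhom).trans crosses_neg.symm
  isIntervalBy_of_noRed j hj hji S hS hnr :=
    (h.isIntervalBy_of_noRed j hj hji S hS hnr).imp IsIntervalBy.neg IsIntervalBy.neg
  isIntervalPair j hj hji S T hST :=
    (h.isIntervalPair j hj hji S T hST).imp IsIntervalPair.neg IsIntervalPair.neg
  intervalPairsAbove p q hpq :=
    (h.intervalPairsAbove p q hpq).imp IntervalPairsAbove.neg IntervalPairsAbove.neg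

end LevelRealiser

lemma levelRealiser_one (hn : 1 ≤ Fintype.card V) : C.LevelRealiser G 1 0 0 := by
  obtain ⟨S₀, hS₀⟩ := card_eq_one.1 (C.parts_card 1 le_rfl hn)
  have eq : ∀ S ∈ (C.parts 1).parts, S = S₀ := fun S hS => mem_singleton.1 (hS₀ ▸ hS)
  have part_eq : ∀ u, (C.parts 1).part u = S₀ := fun u => eq _ (part_mem_parts _ u)
  have interval : ∀ S ∈ (C.parts 1).parts, IsIntervalBy (0 : V → ℤ) S := fun S hS _ _ w _ _ _ _ =>
    eq S hS ▸ part_eq w ▸ mem_part_self _ w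
  refine ⟨fun u w => by simp [part_eq], fun u w => by simp [part_eq],
    fun u w hne => absurd ((part_eq u).trans (part_eq w).symm) hne, ?_, ?_, ?_⟩
  · intro j hj hj1 S hS _
    obtain rfl : j = 1 := by omega
    exact ⟨interval S hS, interval S hS⟩
  · intro j hj hj1 S T hST
    obtain rfl : j = 1 := by omega
    exact absurd ((eq S hST.1).trans (eq T hST.2.1).symm) hST.2.2.1
  · exact fun p q hpq => absurd ((eq p hpq.1).trans (eq q hpq.2.1).symm) hpq.2.2.1

/-- An admissible way of splitting the part `K ∪ Z` of `G_i` into `K` and `Z`: `Z` is moved next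
to `a` in `f` and next to `b` in `g`. Here `Q` is the red neighbour of `K ∪ Z` in `G_i`, or `∅`
if it has none; only in `f` and only over `Q` may `Z` jump away from `K`. -/
structure IsStep (C : ContractionSeq V) (G : SimpleGraph V) (i : ℕ) (f g : V → ℤ)
    (K Z Q : Finset V) (a b : V) (vf vg : ℤ) : Prop where
  one_le : 1 ≤ i
  lt_card : i < Fintype.card V
  split : C.Split i K Z
  part_eq_of_mem_nbr : ∀ w ∈ Q, (C.parts i).part w = Q
  homogeneous : ∀ w, w ∉ K ∪ Z → w ∉ Q → Homogeneous G (K ∪ Z) ((C.parts i).part w)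
  anchor_fst : a ∈ K ∪ Z ∨
    (a ∈ Q ∧ C.IsRedEdge G i (K ∪ Z) Q ∧ C.IntervalPairsAbove G i f g (K ∪ Z) Q)
  anchor_snd : b ∈ K ∪ Z
  value_fst : vf = 2 * f a + 1 ∨ vf = 2 * f a - 1
  value_snd : vg = 2 * g b + 1 ∨ vg = 2 * g b - 1
  homogeneous_right_nbr : Homogeneous G Z Q
  red_left_nbr : C.IsRedEdge G (i + 1) K Q →
    IsIntervalBy (moveTo f Z vf) (K ∪ Q) ∧ C.IntervalPairsAbove G i f g (K ∪ Z) Q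
  adj_iff_crosses_left_right : Homogeneous G K Z →
    ∀ u ∈ K, ∀ w ∈ Z, G.Adj u w ↔ Crosses (moveTo f Z vf) (moveTo g Z vg) u w
  adj_iff_crosses_left_nbr : Homogeneous G K Q →
    ∀ u ∈ K, ∀ w ∈ Q, G.Adj u w ↔ Crosses (moveTo f Z vf) (moveTo g Z vg) u w
  adj_iff_crosses_right_nbr : Homogeneous G Z Q →
    ∀ u ∈ Z, ∀ w ∈ Q, G.Adj u w ↔ Crosses (moveTo f Z vf) (moveTo g Z vg) u w

namespace IsStep

lemma labelling_fst (hI : C.LevelRealiser G i f g) (hS : C.IsStep G i f g K Z Q a b vf vg) :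
    IsLabelling (C.parts (i + 1)) (moveTo f Z vf) :=
  hS.split.isLabelling_moveTo hI.labelling_fst fun _ => by have := hS.value_fst; omega

lemma labelling_snd (hI : C.LevelRealiser G i f g) (hS : C.IsStep G i f g K Z Q a b vf vg) :
    IsLabelling (C.parts (i + 1)) (moveTo g Z vg) :=
  hS.split.isLabelling_moveTo hI.labelling_snd fun _ => by have := hS.value_snd; omega

lemma part_eq_part_of_mem (hS : C.IsStep G i f g K Z Q a b vf vg) {u : V} (hu : u ∈ K ∪ Z) :
    (C.parts i).part u = (C.parts i).part b :=
  (hS.split.part_of_mem hu).trans (hS.split.part_of_mem hS.anchor_snd).symm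

lemma compare_fst (hI : C.LevelRealiser G i f g) (hS : C.IsStep G i f g K Z Q a b vf vg)
    {u w : V} (hu : u ∈ Z) (hw : w ∉ K ∪ Z) (hwQ : w ∉ Q) :
    compare (moveTo f Z vf u) (moveTo f Z vf w) = compare (f u) (f w) := by
  obtain ⟨S, hSint, haS, hpS, hwS⟩ : ∃ S, IsIntervalBy f S ∧ a ∈ S ∧ K ∪ Z ⊆ S ∧ w ∉ S := by
    rcases hS.anchor_fst with ha | ⟨ha, hpQ, habove⟩
    · exact ⟨K ∪ Z, hI.labelling_fst.isIntervalBy hS.split.union_mem, ha, subset_rfl, hw⟩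
    · exact ⟨K ∪ Z ∪ Q, (habove.isIntervalPair hS.one_le hpQ).1, mem_union_right _ ha,
        subset_union_left, by simp only [mem_union, not_or] at hw ⊢; exact ⟨hw, hwQ⟩⟩
  rw [compare_moveTo_of_mem hu (fun h => hw (mem_union_right _ h)) hS.value_fst
    (hSint.ne haS hwS)]
  exact hSint.compare_eq haS (hpS (mem_union_right _ hu)) hwS

lemma compare_snd (hI : C.LevelRealiser G i f g) (hS : C.IsStep G i f g K Z Q a b vf vg)
    {u w : V} (hu : u ∈ Z) (hw : w ∉ K ∪ Z) :
    compare (moveTo g Z vg u) (moveTo g Z vg w) = compare (g u) (g w) := by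
  have hint := hI.labelling_snd.isIntervalBy hS.split.union_mem
  rw [compare_moveTo_of_mem hu (fun h => hw (mem_union_right _ h)) hS.value_snd
    (hint.ne hS.anchor_snd hw)]
  exact hint.compare_eq hS.anchor_snd (mem_union_right _ hu) hw

lemma adj_iff_crosses_of_not_mem (hI : C.LevelRealiser G i f g)
    (hS : C.IsStep G i f g K Z Q a b vf vg) {u w : V} (hu : u ∈ K ∪ Z) (hw : w ∉ K ∪ Z)
    (hwQ : w ∉ Q) (hcf : compare (moveTo f Z vf u) (moveTo f Z vf w) = compare (f u) (f w))
    (hcg : compare (moveTo g Z vg u) (moveTo g Z vg w) = compare (g u) (g w)) :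
    G.Adj u w ↔ Crosses (moveTo f Z vf) (moveTo g Z vg) u w := by
  have hpu := hS.split.part_of_mem hu
  rw [crosses_congr hcf hcg]
  refine hI.adj_iff_crosses u w (fun h => hw ?_) (hpu ▸ hS.homogeneous w hw hwQ)
  exact hpu ▸ h ▸ mem_part_self _ w

lemma adj_iff_crosses_of_mem_right (hI : C.LevelRealiser G i f g)
    (hS : C.IsStep G i f g K Z Q a b vf vg) {u w : V} (hu : u ∈ Z) (hw : w ∉ Z)
    (hhom : Homogeneous G Z ((C.parts (i + 1)).part w)) :
    G.Adj u w ↔ Crosses (moveTo f Z vf) (moveTo g Z vg) u w := by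
  rw [hS.split.part_succ, if_neg hw] at hhom
  by_cases hwK : w ∈ K
  · rw [if_pos hwK] at hhom
    rw [G.adj_comm, crosses_comm]
    exact hS.adj_iff_crosses_left_right hhom.symm w hwK u hu
  have hwp : w ∉ K ∪ Z := by simp [hw, hwK]
  by_cases hwQ : w ∈ Q
  · rw [if_neg hwK, hS.part_eq_of_mem_nbr w hwQ] at hhom
    exact hS.adj_iff_crosses_right_nbr hhom u hu w hwQ
  exact hS.adj_iff_crosses_of_not_mem hI (mem_union_right _ hu) hwp hwQ
    (hS.compare_fst hI hu hwp hwQ) (hS.compare_snd hI hu hwp)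

lemma adj_iff_crosses_of_mem_left (hI : C.LevelRealiser G i f g)
    (hS : C.IsStep G i f g K Z Q a b vf vg) {u w : V} (hu : u ∈ K) (hw : w ∉ K ∪ Z)
    (hhom : Homogeneous G K ((C.parts (i + 1)).part w)) :
    G.Adj u w ↔ Crosses (moveTo f Z vf) (moveTo g Z vg) u w := by
  have huZ : u ∉ Z := disjoint_left.1 hS.split.disjoint hu
  have hwZ : w ∉ Z := fun h => hw (mem_union_right _ h)
  by_cases hwQ : w ∈ Q
  · rw [hS.split.part_succ, if_neg hwZ, if_neg fun h => hw (mem_union_left _ h),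
      hS.part_eq_of_mem_nbr w hwQ] at hhom
    exact hS.adj_iff_crosses_left_nbr hhom u hu w hwQ
  exact hS.adj_iff_crosses_of_not_mem hI (mem_union_left _ hu) hw hwQ
    (compare_moveTo_of_not_mem huZ hwZ) (compare_moveTo_of_not_mem huZ hwZ)

lemma adj_iff_crosses (hI : C.LevelRealiser G i f g) (hS : C.IsStep G i f g K Z Q a b vf vg)
    (u w : V) (hne : (C.parts (i + 1)).part u ≠ (C.parts (i + 1)).part w)
    (hhom : Homogeneous G ((C.parts (i + 1)).part u) ((C.parts (i + 1)).part w)) :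
    G.Adj u w ↔ Crosses (moveTo f Z vf) (moveTo g Z vg) u w := by
  have flip : (G.Adj w u ↔ Crosses (moveTo f Z vf) (moveTo g Z vg) w u) →
      (G.Adj u w ↔ Crosses (moveTo f Z vf) (moveTo g Z vg) u w) := by
    rw [G.adj_comm, crosses_comm]
    exact id
  have partZ : ∀ {u}, u ∈ Z → (C.parts (i + 1)).part u = Z :=
    fun hu => (C.parts _).part_eq_of_mem hS.split.right_mem hu
  have partK : ∀ {u}, u ∈ K → (C.parts (i + 1)).part u = K :=
    fun hu => (C.parts _).part_eq_of_mem hS.split.left_mem hu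
  have notMem : ∀ {u}, u ∉ Z → u ∉ K → u ∉ K ∪ Z := fun hZ hK => by simp [hZ, hK]
  by_cases hu : u ∈ Z
  · by_cases hw : w ∈ Z
    · exact absurd ((partZ hu).trans (partZ hw).symm) hne
    · exact hS.adj_iff_crosses_of_mem_right hI hu hw (partZ hu ▸ hhom)
  by_cases hw : w ∈ Z
  · exact flip (hS.adj_iff_crosses_of_mem_right hI hw hu (partZ hw ▸ hhom.symm))
  by_cases huK : u ∈ K
  · by_cases hwK : w ∈ K
    · exact absurd ((partK huK).trans (partK hwK).symm) hne
    · exact hS.adj_iff_crosses_of_mem_left hI huK (notMem hw hwK) (partK huK ▸ hhom)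
  by_cases hwK : w ∈ K
  · exact flip (hS.adj_iff_crosses_of_mem_left hI hwK (notMem hu huK) (partK hwK ▸ hhom.symm))
  have partOld : ∀ {u}, u ∉ Z → u ∉ K → (C.parts (i + 1)).part u = (C.parts i).part u :=
    fun hZ hK => by rw [hS.split.part_succ, if_neg hZ, if_neg hK]
  rw [crosses_congr (compare_moveTo_of_not_mem hu hw) (compare_moveTo_of_not_mem hu hw)]
  rw [partOld hu huK, partOld hw hwK] at hne hhom
  exact hI.adj_iff_crosses u w hne hhom

lemma isIntervalBy_snd (hS : C.IsStep G i f g K Z Q a b vf vg)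
    (hsat : IsSaturated (C.parts i) S) (h : IsIntervalBy g S) :
    IsIntervalBy (moveTo g Z vg) S :=
  h.moveTo_of_mem_iff hS.value_snd fun _ hz =>
    hsat.mem_iff (hS.part_eq_part_of_mem (mem_union_right _ hz))

lemma isIntervalBy_fst (hS : C.IsStep G i f g K Z Q a b vf vg)
    (hsat : IsSaturated (C.parts i) S) (hba : b ∈ S ↔ a ∈ S) (h : IsIntervalBy f S) :
    IsIntervalBy (moveTo f Z vf) S :=
  h.moveTo_of_mem_iff hS.value_fst fun _ hz =>
    (hsat.mem_iff (hS.part_eq_part_of_mem (mem_union_right _ hz))).trans hba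

lemma isIntervalPair (hS : C.IsStep G i f g K Z Q a b vf vg)
    (hsatS : IsSaturated (C.parts i) S) (hsatT : IsSaturated (C.parts i) T)
    (hbaS : b ∈ S ↔ a ∈ S) (hbaT : b ∈ T ↔ a ∈ T) :
    (IsIntervalPair f g S T → IsIntervalPair (moveTo f Z vf) (moveTo g Z vg) S T) ∧
    (IsIntervalPair g f S T → IsIntervalPair (moveTo g Z vg) (moveTo f Z vf) S T) := by
  have hbaST : b ∈ S ∪ T ↔ a ∈ S ∪ T := by simp only [mem_union, hbaS, hbaT]
  exact ⟨fun ⟨h₁, h₂, h₃⟩ => ⟨hS.isIntervalBy_fst (hsatS.union hsatT) hbaST h₁,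
      hS.isIntervalBy_snd hsatS h₂, hS.isIntervalBy_snd hsatT h₃⟩,
    fun ⟨h₁, h₂, h₃⟩ => ⟨hS.isIntervalBy_snd (hsatS.union hsatT) h₁,
      hS.isIntervalBy_fst hsatS hbaS h₂, hS.isIntervalBy_fst hsatT hbaT h₃⟩⟩

lemma mem_iff_of_noRed (hS : C.IsStep G i f g K Z Q a b vf vg) (hj : 1 ≤ j) (hji : j ≤ i)
    (hT : T ∈ (C.parts j).parts) (hnr : ∀ T', ¬ C.IsRedEdge G j T T') : b ∈ T ↔ a ∈ T := by
  rcases hS.anchor_fst with ha | ⟨ha, hpQ, -⟩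
  · exact (C.isSaturated_of_mem hj hji hS.lt_card.le hT).mem_iff (hS.part_eq_part_of_mem ha).symm
  · exact mem_iff_of_forall_not_isRedEdge hj hji hS.lt_card.le hT hnr hpQ hS.anchor_snd ha

lemma mem_iff_of_isRedEdge (hC : IsDSeq G C 1) (hS : C.IsStep G i f g K Z Q a b vf vg)
    (hj : 1 ≤ j) (hji : j ≤ i) (hST : C.IsRedEdge G j S T) :
    ((b ∈ S ↔ a ∈ S) ∧ (b ∈ T ↔ a ∈ T)) ∨
      (a ∈ Q ∧ C.IsRedEdge G i (K ∪ Z) Q ∧ C.IntervalPairsAbove G i f g (K ∪ Z) Q ∧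
        ((K ∪ Z ⊆ S ∧ Q ⊆ T) ∨ (Q ⊆ S ∧ K ∪ Z ⊆ T))) := by
  rcases hS.anchor_fst with ha | ⟨ha, hpQ, habove⟩
  · have sat := fun {U} (hU : U ∈ (C.parts j).parts) =>
      C.isSaturated_of_mem hj hji hS.lt_card.le hU
    exact Or.inl ⟨(sat hST.1).mem_iff (hS.part_eq_part_of_mem ha).symm,
      (sat hST.2.1).mem_iff (hS.part_eq_part_of_mem ha).symm⟩
  · rcases mem_iff_or_subset hC hj hji hS.lt_card.le hST hpQ hS.anchor_snd ha with h | h | h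
    · exact Or.inl h
    · exact Or.inr ⟨ha, hpQ, habove, Or.inl h⟩
    · exact Or.inr ⟨ha, hpQ, habove, Or.inr h⟩

lemma isIntervalBy_of_noRed (hI : C.LevelRealiser G i f g)
    (hS : C.IsStep G i f g K Z Q a b vf vg) (hj : 1 ≤ j) (hji : j ≤ i + 1)
    (hT : T ∈ (C.parts j).parts) (hnr : ∀ T', ¬ C.IsRedEdge G j T T') :
    IsIntervalBy (moveTo f Z vf) T ∧ IsIntervalBy (moveTo g Z vg) T := by
  rcases Nat.lt_or_eq_of_le hji with hji | rfl
  · have hji : j ≤ i := Nat.le_of_lt_succ hji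
    have hsat := C.isSaturated_of_mem hj hji hS.lt_card.le hT
    obtain ⟨hf, hg⟩ := hI.isIntervalBy_of_noRed j hj hji T hT hnr
    exact ⟨hS.isIntervalBy_fst hsat (hS.mem_iff_of_noRed hj hji hT hnr) hf,
      hS.isIntervalBy_snd hsat hg⟩
  · exact ⟨(hS.labelling_fst hI).isIntervalBy hT, (hS.labelling_snd hI).isIntervalBy hT⟩

lemma isIntervalPair_of_le (hC : IsDSeq G C 1) (hI : C.LevelRealiser G i f g)
    (hS : C.IsStep G i f g K Z Q a b vf vg) (hj : 1 ≤ j) (hji : j ≤ i)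
    (hST : C.IsRedEdge G j S T) :
    IsIntervalPair (moveTo f Z vf) (moveTo g Z vg) S T ∨
      IsIntervalPair (moveTo g Z vg) (moveTo f Z vf) S T := by
  have sat := fun {U} (hU : U ∈ (C.parts j).parts) =>
    C.isSaturated_of_mem hj hji hS.lt_card.le hU
  rcases hS.mem_iff_of_isRedEdge hC hj hji hST with ⟨hbaS, hbaT⟩ | ⟨ha, -, habove, hsub⟩
  · have h := hS.isIntervalPair (sat hST.1) (sat hST.2.1) hbaS hbaT
    exact (hI.isIntervalPair j hj hji S T hST).imp h.1 h.2
  · have hpair : IsIntervalPair f g S T := by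
      rcases hsub with ⟨h₁, h₂⟩ | ⟨h₁, h₂⟩
      exacts [habove j hj hji S T hST h₁ h₂, (habove j hj hji T S hST.symm h₂ h₁).symm]
    have hb : b ∈ S ∪ T := by
      rcases hsub with ⟨h, -⟩ | ⟨-, h⟩ <;> simp [h hS.anchor_snd]
    have ha' : a ∈ S ∪ T := by
      rcases hsub with ⟨-, h⟩ | ⟨h, -⟩ <;> simp [h ha]
    exact Or.inl ⟨hS.isIntervalBy_fst ((sat hST.1).union (sat hST.2.1)) (iff_of_true hb ha')
      hpair.1, hS.isIntervalBy_snd (sat hST.1) hpair.2.1,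
      hS.isIntervalBy_snd (sat hST.2.1) hpair.2.2⟩

lemma eq_of_not_homogeneous (hS : C.IsStep G i f g K Z Q a b vf vg)
    (hA : A ⊆ K ∪ Z) (hB : B ∈ (C.parts i).parts) (hBp : Disjoint B (K ∪ Z))
    (hAB : ¬ Homogeneous G A B) : B = Q := by
  obtain ⟨w, hw⟩ := (C.parts i).nonempty_of_mem_parts hB
  have hpart : (C.parts i).part w = B := (C.parts i).part_eq_of_mem hB hw
  by_contra hBQ
  have hwQ : w ∉ Q := fun h => hBQ (hpart.symm.trans (hS.part_eq_of_mem_nbr w h))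
  exact hAB ((hpart ▸ hS.homogeneous w (disjoint_left.1 hBp hw) hwQ).mono hA subset_rfl)

lemma isRedEdge_succ_cases (hS : C.IsStep G i f g K Z Q a b vf vg)
    (hAB : C.IsRedEdge G (i + 1) A B) :
    (A = K ∧ B = Z) ∨ (A = Z ∧ B = K) ∨ (A = K ∧ B = Q) ∨ (A = Q ∧ B = K) ∨
      (Disjoint A (K ∪ Z) ∧ Disjoint B (K ∪ Z) ∧ C.IsRedEdge G i A B) := by
  have side : ∀ {A B}, C.IsRedEdge G (i + 1) A B → A = K ∨ A = Z → B ∈ (C.parts i).parts →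
      Disjoint B (K ∪ Z) → A = K ∧ B = Q := by
    intro A B h hA hB hBp
    have hBQ := hS.eq_of_not_homogeneous (by rcases hA with rfl | rfl <;> simp) hB hBp h.2.2.2
    refine ⟨hA.resolve_right ?_, hBQ⟩
    rintro rfl
    exact h.2.2.2 (hBQ ▸ hS.homogeneous_right_nbr)
  rcases hS.split.mem_succ_cases hAB.1 with rfl | rfl | ⟨hA, hAp⟩ <;>
    rcases hS.split.mem_succ_cases hAB.2.1 with rfl | rfl | ⟨hB, hBp⟩
  · exact absurd rfl hAB.2.2.1
  · exact Or.inl ⟨rfl, rfl⟩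
  · exact Or.inr (Or.inr (Or.inl (side hAB (Or.inl rfl) hB hBp)))
  · exact Or.inr (Or.inl ⟨rfl, rfl⟩)
  · exact absurd rfl hAB.2.2.1
  · exact Or.inr (Or.inr (Or.inl (side hAB (Or.inr rfl) hB hBp)))
  · exact Or.inr (Or.inr (Or.inr (Or.inl (side hAB.symm (Or.inl rfl) hA hAp).symm)))
  · exact Or.inr (Or.inr (Or.inr (Or.inl (side hAB.symm (Or.inr rfl) hA hAp).symm)))
  · exact Or.inr (Or.inr (Or.inr (Or.inr ⟨hAp, hBp, hA, hB, hAB.2.2.1, hAB.2.2.2⟩)))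

lemma intervalPairsAbove_split (hI : C.LevelRealiser G i f g)
    (hS : C.IsStep G i f g K Z Q a b vf vg) :
    C.IntervalPairsAbove G (i + 1) (moveTo g Z vg) (moveTo f Z vf) K Z := by
  intro j hj hji S T hST hKS hZT
  rcases Nat.lt_or_eq_of_le hji with hji | rfl
  · obtain ⟨k, hk⟩ := (C.parts _).nonempty_of_mem_parts hS.split.left_mem
    obtain ⟨z, hz⟩ := (C.parts _).nonempty_of_mem_parts hS.split.right_mem
    have hpS := (C.isSaturated_of_mem hj (Nat.le_of_lt_succ hji) hS.lt_card.le hST.1).subset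
      hS.split.union_mem (mem_union_left _ hk) (hKS hk)
    exact absurd (hZT hz) (disjoint_left.1 ((C.parts j).disjoint hST.1 hST.2.1 hST.2.2.1)
      (hpS (mem_union_right _ hz)))
  · obtain rfl := (C.parts _).eq_of_subset_of_mem_parts hS.split.left_mem hST.1 hKS
    obtain rfl := (C.parts _).eq_of_subset_of_mem_parts hS.split.right_mem hST.2.1 hZT
    exact ⟨hS.isIntervalBy_snd (IsSaturated.of_le le_rfl hS.split.union_mem)
        (hI.labelling_snd.isIntervalBy hS.split.union_mem),
      (hS.labelling_fst hI).isIntervalBy hS.split.left_mem,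
      (hS.labelling_fst hI).isIntervalBy hS.split.right_mem⟩

lemma intervalPairsAbove_red (hI : C.LevelRealiser G i f g)
    (hS : C.IsStep G i f g K Z Q a b vf vg) (hKQ : C.IsRedEdge G (i + 1) K Q) :
    C.IntervalPairsAbove G (i + 1) (moveTo f Z vf) (moveTo g Z vg) K Q := by
  obtain ⟨hint, habove⟩ := hS.red_left_nbr hKQ
  intro j hj hji S T hST hKS hQT
  rcases Nat.lt_or_eq_of_le hji with hji | rfl
  · have hji : j ≤ i := Nat.le_of_lt_succ hji
    have sat := fun {U} (hU : U ∈ (C.parts j).parts) =>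
      C.isSaturated_of_mem hj hji hS.lt_card.le hU
    obtain ⟨k, hk⟩ := (C.parts _).nonempty_of_mem_parts hS.split.left_mem
    have hpS := (sat hST.1).subset hS.split.union_mem (mem_union_left _ hk) (hKS hk)
    have hpair := habove j hj hji S T hST hpS hQT
    have ha : a ∈ S ∪ T := by
      rcases hS.anchor_fst with ha | ⟨ha, -⟩
      exacts [mem_union_left _ (hpS ha), mem_union_right _ (hQT ha)]
    exact ⟨hS.isIntervalBy_fst ((sat hST.1).union (sat hST.2.1))
        (iff_of_true (mem_union_left _ (hpS hS.anchor_snd)) ha) hpair.1,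
      hS.isIntervalBy_snd (sat hST.1) hpair.2.1, hS.isIntervalBy_snd (sat hST.2.1) hpair.2.2⟩
  · obtain rfl := (C.parts _).eq_of_subset_of_mem_parts hS.split.left_mem hST.1 hKS
    obtain rfl := (C.parts _).eq_of_subset_of_mem_parts hKQ.2.1 hST.2.1 hQT
    exact ⟨hint, (hS.labelling_snd hI).isIntervalBy hKQ.1,
      (hS.labelling_snd hI).isIntervalBy hKQ.2.1⟩

/-- By uniqueness of descendants, a red edge above one away from `K ∪ Z` does not lie above
`(K ∪ Z, Q)`. -/
lemma mem_iff_of_disjoint (hC : IsDSeq G C 1) (hS : C.IsStep G i f g K Z Q a b vf vg)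
    (hAB : C.IsRedEdge G i A B) (hA : Disjoint A (K ∪ Z)) (hB : Disjoint B (K ∪ Z))
    (hj : 1 ≤ j) (hji : j ≤ i) (hST : C.IsRedEdge G j S T) (hAS : A ⊆ S) (hBT : B ⊆ T) :
    (b ∈ S ↔ a ∈ S) ∧ (b ∈ T ↔ a ∈ T) := by
  rcases hS.mem_iff_of_isRedEdge hC hj hji hST with h | ⟨-, hpQ, -, hsub⟩
  · exact h
  exfalso
  rcases hsub with ⟨h₁, h₂⟩ | ⟨h₁, h₂⟩
  · exact (C.parts i).ne_of_disjoint hAB.1 hA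
      (red_descendant_unique hC hj hji hS.lt_card.le hST hAB hpQ hAS hBT h₁ h₂).1
  · exact (C.parts i).ne_of_disjoint hAB.2.1 hB
      (red_descendant_unique hC hj hji hS.lt_card.le hST hAB hpQ.symm hAS hBT h₁ h₂).2

lemma not_mem_of_disjoint (hC : IsDSeq G C 1) (hS : C.IsStep G i f g K Z Q a b vf vg)
    (hAB : C.IsRedEdge G i A B) (hA : Disjoint A (K ∪ Z)) (hB : Disjoint B (K ∪ Z)) :
    a ∉ A ∧ a ∉ B := by
  rcases hS.anchor_fst with ha | ⟨ha, hpQ, -⟩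
  · exact ⟨disjoint_right.1 hA ha, disjoint_right.1 hB ha⟩
  have hd := fun {U} (hU : U ∈ (C.parts i).parts) (hne : U ≠ Q) =>
    disjoint_right.1 ((C.parts i).disjoint hU hpQ.2.1 hne) ha
  refine ⟨hd hAB.1 fun hAQ => ?_, hd hAB.2.1 fun hBQ => ?_⟩
  · exact (C.parts i).ne_of_disjoint hAB.2.1 hB
      (red_unique hC hS.one_le hS.lt_card.le (hAQ ▸ hAB) hpQ.symm)
  · exact (C.parts i).ne_of_disjoint hAB.1 hA
      (red_unique hC hS.one_le hS.lt_card.le (hBQ ▸ hAB.symm) hpQ.symm)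

lemma intervalPairsAbove_of_disjoint (hC : IsDSeq G C 1)
    (hS : C.IsStep G i f g K Z Q a b vf vg) (hAB : C.IsRedEdge G i A B)
    (hA : Disjoint A (K ∪ Z)) (hB : Disjoint B (K ∪ Z)) :
    (C.IntervalPairsAbove G i f g A B →
      C.IntervalPairsAbove G (i + 1) (moveTo f Z vf) (moveTo g Z vg) A B) ∧
    (C.IntervalPairsAbove G i g f A B →
      C.IntervalPairsAbove G (i + 1) (moveTo g Z vg) (moveTo f Z vf) A B) := by
  have transfer : ∀ {c o c' o' : V → ℤ}, (∀ {S T : Finset V}, IsSaturated (C.parts i) S →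
      IsSaturated (C.parts i) T → (b ∈ S ↔ a ∈ S) → (b ∈ T ↔ a ∈ T) →
      IsIntervalPair c o S T → IsIntervalPair c' o' S T) →
      C.IntervalPairsAbove G i c o A B → C.IntervalPairsAbove G (i + 1) c' o' A B := by
    intro c o c' o' keep habove j hj hji S T hST hAS hBT
    rcases Nat.lt_or_eq_of_le hji with hji | rfl
    · have hji : j ≤ i := Nat.le_of_lt_succ hji
      obtain ⟨hbaS, hbaT⟩ := hS.mem_iff_of_disjoint hC hAB hA hB hj hji hST hAS hBT
      exact keep (C.isSaturated_of_mem hj hji hS.lt_card.le hST.1)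
        (C.isSaturated_of_mem hj hji hS.lt_card.le hST.2.1) hbaS hbaT
        (habove j hj hji S T hST hAS hBT)
    · have hA' := hS.split.mem_succ hAB.1 ((C.parts i).ne_of_disjoint hAB.1 hA)
      have hB' := hS.split.mem_succ hAB.2.1 ((C.parts i).ne_of_disjoint hAB.2.1 hB)
      obtain rfl := (C.parts _).eq_of_subset_of_mem_parts hA' hST.1 hAS
      obtain rfl := (C.parts _).eq_of_subset_of_mem_parts hB' hST.2.1 hBT
      obtain ⟨haA, haB⟩ := hS.not_mem_of_disjoint hC hAB hA hB
      exact keep (IsSaturated.of_le le_rfl hAB.1) (IsSaturated.of_le le_rfl hAB.2.1)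
        (iff_of_false (disjoint_right.1 hA hS.anchor_snd) haA)
        (iff_of_false (disjoint_right.1 hB hS.anchor_snd) haB)
        (habove.isIntervalPair hS.one_le hAB)
  exact ⟨transfer fun hsS hsT hS' hT' => (hS.isIntervalPair hsS hsT hS' hT').1,
    transfer fun hsS hsT hS' hT' => (hS.isIntervalPair hsS hsT hS' hT').2⟩

lemma intervalPairsAbove_succ (hC : IsDSeq G C 1) (hI : C.LevelRealiser G i f g)
    (hS : C.IsStep G i f g K Z Q a b vf vg) (A B : Finset V)
    (hAB : C.IsRedEdge G (i + 1) A B) :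
    C.IntervalPairsAbove G (i + 1) (moveTo f Z vf) (moveTo g Z vg) A B ∨
      C.IntervalPairsAbove G (i + 1) (moveTo g Z vg) (moveTo f Z vf) A B := by
  rcases hS.isRedEdge_succ_cases hAB with
    ⟨rfl, rfl⟩ | ⟨rfl, rfl⟩ | ⟨rfl, rfl⟩ | ⟨rfl, rfl⟩ | ⟨hA, hB, hAB'⟩
  · exact Or.inr (hS.intervalPairsAbove_split hI)
  · exact Or.inr (hS.intervalPairsAbove_split hI).symm
  · exact Or.inl (hS.intervalPairsAbove_red hI hAB)
  · exact Or.inl (hS.intervalPairsAbove_red hI hAB.symm).symm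
  · have h := hS.intervalPairsAbove_of_disjoint hC hAB' hA hB
    exact (hI.intervalPairsAbove A B hAB').imp h.1 h.2

theorem levelRealiser (hC : IsDSeq G C 1) (hI : C.LevelRealiser G i f g)
    (hS : C.IsStep G i f g K Z Q a b vf vg) :
    C.LevelRealiser G (i + 1) (moveTo f Z vf) (moveTo g Z vg) where
  labelling_fst := hS.labelling_fst hI
  labelling_snd := hS.labelling_snd hI
  adj_iff_crosses := hS.adj_iff_crosses hI
  isIntervalBy_of_noRed _ hj hji _ hT hnr := hS.isIntervalBy_of_noRed hI hj hji hT hnr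
  isIntervalPair j hj hji S T hST := by
    rcases Nat.lt_or_eq_of_le hji with hji | rfl
    · exact hS.isIntervalPair_of_le hC hI hj (Nat.le_of_lt_succ hji) hST
    · exact (hS.intervalPairsAbove_succ hC hI S T hST).imp
        (·.isIntervalPair hj hST) (·.isIntervalPair hj hST)
  intervalPairsAbove := hS.intervalPairsAbove_succ hC hI

end IsStep

namespace LevelRealiser

lemma exists_succ_of_noRed (hC : IsDSeq G C 1) (hI : C.LevelRealiser G i f g) (hi : 1 ≤ i)
    (hin : i < Fintype.card V) (hs : C.Split i K Z) (hnr : ∀ T, ¬ C.IsRedEdge G i (K ∪ Z) T) :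
    ∃ f' g', C.LevelRealiser G (i + 1) f' g' := by
  obtain ⟨k, hk⟩ := (C.parts _).nonempty_of_mem_parts hs.left_mem
  obtain ⟨z, hz⟩ := (C.parts _).nonempty_of_mem_parts hs.right_mem
  have hkZ : k ∉ Z := disjoint_left.1 hs.disjoint hk
  obtain ⟨vg, hvg, hside⟩ := exists_odd_adjacent_lt_iff (g k) (¬ G.Adj k z)
  refine ⟨_, _, IsStep.levelRealiser hC hI (Q := ∅) (a := k) (b := k) (vf := 2 * f k - 1)
    ⟨hi, hin, hs, by simp, fun w hw _ => ?_, Or.inl (mem_union_left _ hk), mem_union_left _ hk,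
    Or.inr rfl, hvg,
    Or.inl (by simp), fun h => absurd h.2.1 (C.parts _).empty_notMem_parts, fun hKZ => ?_,
    by simp, by simp⟩⟩
  · by_contra h
    exact hnr _ ⟨hs.union_mem, part_mem_parts _ w, fun he => hw (he ▸ mem_part_self _ w), h⟩
  · refine (hs.isLabelling_moveTo hI.labelling_fst fun _ => by omega).adj_iff_crosses
      (hs.isLabelling_moveTo hI.labelling_snd fun _ => by omega) hs.left_mem hs.right_mem hKZ
      hk hz ?_
    rw [Crosses, moveTo_of_not_mem hkZ, moveTo_of_mem hz, moveTo_of_not_mem hkZ,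
      moveTo_of_mem hz]
    by_cases hadj : G.Adj k z <;> simp only [hadj, not_true, not_false_iff, iff_false,
      iff_true, true_iff, false_iff] at hside ⊢ <;> omega

lemma exists_roles (hC : IsDSeq G C 1) (hI : C.LevelRealiser G i f g)
    (hin : i < Fintype.card V) (hs : C.Split i X Y) (hpq : C.IsRedEdge G i (X ∪ Y) q) :
    ∃ K Z, C.Split i K Z ∧ K ∪ Z = X ∪ Y ∧ Homogeneous G Z q ∧
      (Homogeneous G K q → ∀ u ∈ K, ∀ w ∈ q, G.Adj u w ↔ Crosses f g u w) := by
  obtain ⟨x, hx⟩ := (C.parts _).nonempty_of_mem_parts hs.left_mem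
  obtain ⟨y, hy⟩ := (C.parts _).nonempty_of_mem_parts hs.right_mem
  obtain ⟨w, hw⟩ := (C.parts _).nonempty_of_mem_parts hpq.2.1
  have hpart : ∀ {u}, u ∈ X ∪ Y → (C.parts i).part u = X ∪ Y := hs.part_of_mem
  have extend : ∀ {K}, K ⊆ X ∪ Y → Homogeneous G K q → ∀ {k}, k ∈ K →
      (G.Adj k w ↔ Crosses f g k w) → ∀ u ∈ K, ∀ w' ∈ q, G.Adj u w' ↔ Crosses f g u w' := by
    intro K hK hKq k hk h u hu w' hw'
    rw [hKq.adj_iff hu hw' hk hw, hI.labelling_fst.crosses_iff hI.labelling_snd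
      ((hpart (hK hu)).trans (hpart (hK hk)).symm) (((C.parts i).part_eq_of_mem hpq.2.1 hw').trans
      ((C.parts i).part_eq_of_mem hpq.2.1 hw).symm)]
    exact h
  by_cases hXq : Homogeneous G X q
  · by_cases hYq : Homogeneous G Y q
    -- `X` and `Y` are homogeneous to `q` of opposite kinds; keep the one already realised.
    · have hne : ¬ (G.Adj x w ↔ G.Adj y w) := fun h => hpq.2.2.2 (hXq.union hYq hx hy hw h)
      have hcr : Crosses f g x w ↔ Crosses f g y w := hI.labelling_fst.crosses_iff
        hI.labelling_snd ((hpart (mem_union_left _ hx)).trans (hpart (mem_union_right _ hy)).symm)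
        rfl
      by_cases hxw : G.Adj x w ↔ Crosses f g x w
      · exact ⟨X, Y, hs, rfl, hYq, fun _ => extend subset_union_left hXq hx hxw⟩
      · exact ⟨Y, X, hs.symm, union_comm _ _, hXq,
          fun _ => extend subset_union_right hYq hy
            (((not_iff.1 hne).symm.trans (not_iff.1 hxw)).trans hcr)⟩
    · exact ⟨Y, X, hs.symm, union_comm _ _, hXq, fun h => absurd h hYq⟩
  · have hq := hs.mem_succ hpq.2.1 hpq.2.2.1.symm
    refine ⟨X, Y, hs, rfl, ?_, fun h => absurd h hXq⟩
    by_contra hYq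
    have hne : ∀ {U}, U ⊆ X ∪ Y → q ≠ U := fun hU he => hpq.2.2.1
      ((C.parts i).eq_of_subset_of_mem_parts hpq.2.1 hs.union_mem (he ▸ hU)).symm
    exact hs.ne (red_unique hC (by omega) hin
      ⟨hq, hs.left_mem, hne subset_union_left, fun h => hXq h.symm⟩
      ⟨hq, hs.right_mem, hne subset_union_right, fun h => hYq h.symm⟩)

lemma isIntervalBy_moveTo_union (hI : C.LevelRealiser G i f g) (hi : 1 ≤ i)
    (hs : C.Split i K Z) (hpq : C.IsRedEdge G i (K ∪ Z) q)
    (habove : C.IntervalPairsAbove G i f g (K ∪ Z) q) {k y : V} (hk : k ∈ K) (hy : y ∈ q)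
    (hlt : f k < f y) {v : ℤ} (hv : v < 2 * f k ∨ 2 * f y < v) :
    IsIntervalBy (moveTo f Z v) (K ∪ q) := by
  have hqp := disjoint_left.1 ((C.parts i).disjoint hpq.2.1 hs.union_mem hpq.2.2.1.symm)
  have hfK : ∀ u ∈ K, f u = f k := fun u hu => (hI.labelling_fst u k).2
    ((hs.part_of_mem (mem_union_left _ hu)).trans (hs.part_of_mem (mem_union_left _ hk)).symm)
  have hfq : ∀ u ∈ q, f u = f y := fun u hu => (hI.labelling_fst u y).2
    (((C.parts i).part_eq_of_mem hpq.2.1 hu).trans ((C.parts i).part_eq_of_mem hpq.2.1 hy).symm)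
  refine IsIntervalBy.moveTo_of_disjoint (union_right_comm K Z q ▸
    (habove.isIntervalPair hi hpq).1) (disjoint_union_left.2 ⟨hs.disjoint,
    disjoint_left.2 fun u hu huZ => hqp hu (mem_union_right _ huZ)⟩) ?_
  simp only [mem_union]
  rcases hv with h | h
  · exact Or.inl fun u hu => by rcases hu with hu | hu <;> [rw [hfK u hu]; rw [hfq u hu]] <;> omega
  · exact Or.inr fun u hu => by rcases hu with hu | hu <;> [rw [hfK u hu]; rw [hfq u hu]] <;> omega

lemma isStep_of_red (hC : IsDSeq G C 1) (hI : C.LevelRealiser G i f g) (hi : 1 ≤ i)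
    (hin : i < Fintype.card V) (hs : C.Split i K Z) (hpq : C.IsRedEdge G i (K ∪ Z) q)
    (habove : C.IntervalPairsAbove G i f g (K ∪ Z) q) (hZq : Homogeneous G Z q)
    (hKq : Homogeneous G K q → ∀ u ∈ K, ∀ w ∈ q, G.Adj u w ↔ Crosses f g u w) {a k y z : V}
    (hk : k ∈ K) (hy : y ∈ q) (hz : z ∈ Z) (hlt : f k < f y) {vf vg : ℤ} (ha : a = k ∨ a = y)
    (hvf : vf = 2 * f a + 1 ∨ vf = 2 * f a - 1) (hout : vf < 2 * f k ∨ 2 * f y < vf)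
    (hside : vf < 2 * f y ↔ (G.Adj z y ↔ g y < g k))
    (hvg : vg = 2 * g k + 1 ∨ vg = 2 * g k - 1)
    (hvgside : vg < 2 * g k ↔ (G.Adj k z ↔ 2 * f k < vf)) :
    C.IsStep G i f g K Z q a k vf vg := by
  have hkZ : k ∉ Z := disjoint_left.1 hs.disjoint hk
  have hqp := disjoint_left.1 ((C.parts i).disjoint hpq.2.1 hs.union_mem hpq.2.2.1.symm)
  have hyZ : y ∉ Z := fun h => hqp hy (mem_union_right _ h)
  have hgky : g y ≠ g k := fun h => hpq.2.2.1 (((C.parts i).part_eq_of_mem hs.union_mem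
    (mem_union_left _ hk)).symm.trans (((hI.labelling_snd y k).1 h).symm.trans
    ((C.parts i).part_eq_of_mem hpq.2.1 hy)))
  have hf' := hs.isLabelling_moveTo hI.labelling_fst (v := vf) fun _ => by omega
  have hg' := hs.isLabelling_moveTo hI.labelling_snd (v := vg) fun _ => by omega
  refine ⟨hi, hin, hs, fun w hw => (C.parts i).part_eq_of_mem hpq.2.1 hw, fun w hw hwq => ?_,
    ha.imp (fun (h : a = k) => h ▸ mem_union_left _ hk) (fun (h : a = y) => ⟨h ▸ hy, hpq, habove⟩),
    mem_union_left _ hk, hvf, hvg, hZq,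
    fun _ => ⟨isIntervalBy_moveTo_union hI hi hs hpq habove hk hy hlt hout, habove⟩,
    fun hKZ => ?_, fun hKq' u hu w hw => ?_, fun hZq' => ?_⟩
  · by_contra h
    have := red_unique hC hi hin.le hpq ⟨hs.union_mem, part_mem_parts _ w,
      fun he => hw (he ▸ mem_part_self _ w), h⟩
    exact hwq (this ▸ mem_part_self _ w)
  · refine hf'.adj_iff_crosses hg' hs.left_mem hs.right_mem hKZ hk hz ?_
    rw [Crosses, moveTo_of_not_mem hkZ, moveTo_of_mem hz, moveTo_of_not_mem hkZ,
      moveTo_of_mem hz]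
    by_cases hadj : G.Adj k z <;> simp only [hadj, true_iff, false_iff] at hvgside ⊢ <;> omega
  · have huZ : u ∉ Z := disjoint_left.1 hs.disjoint hu
    have hwZ : w ∉ Z := fun h => hqp hw (mem_union_right _ h)
    rw [hKq hKq' u hu w hw, crosses_congr (compare_moveTo_of_not_mem huZ hwZ)
      (compare_moveTo_of_not_mem huZ hwZ)]
  · refine hf'.adj_iff_crosses hg' hs.right_mem (hs.mem_succ hpq.2.1 hpq.2.2.1.symm) hZq' hz hy ?_
    rw [Crosses, moveTo_of_mem hz, moveTo_of_not_mem hyZ, moveTo_of_mem hz,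
      moveTo_of_not_mem hyZ]
    by_cases hadj : G.Adj z y <;> simp only [hadj, true_iff, false_iff] at hside ⊢ <;> omega

/-- `Z` is placed just below `K` or jumps just above the red neighbour `q`, whichever realises
its relation to `q`; then its side of `K` in `g` is chosen to realise its relation to `K`. -/
lemma exists_succ_of_red (hC : IsDSeq G C 1) (hI : C.LevelRealiser G i f g) (hi : 1 ≤ i)
    (hin : i < Fintype.card V) (hs : C.Split i K Z) (hpq : C.IsRedEdge G i (K ∪ Z) q)
    (habove : C.IntervalPairsAbove G i f g (K ∪ Z) q) (hZq : Homogeneous G Z q)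
    (hKq : Homogeneous G K q → ∀ u ∈ K, ∀ w ∈ q, G.Adj u w ↔ Crosses f g u w) {k y : V}
    (hk : k ∈ K) (hy : y ∈ q) (hlt : f k < f y) :
    ∃ f' g', C.LevelRealiser G (i + 1) f' g' := by
  obtain ⟨z, hz⟩ := (C.parts _).nonempty_of_mem_parts hs.right_mem
  obtain ⟨a, vf, ha, hvf, hout, hside⟩ : ∃ a vf, (a = k ∨ a = y) ∧
      (vf = 2 * f a + 1 ∨ vf = 2 * f a - 1) ∧ (vf < 2 * f k ∨ 2 * f y < vf) ∧
      (vf < 2 * f y ↔ (G.Adj z y ↔ g y < g k)) := by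
    by_cases h : G.Adj z y ↔ g y < g k
    · exact ⟨k, 2 * f k - 1, Or.inl rfl, Or.inr rfl, Or.inl (by omega), iff_of_true (by omega) h⟩
    · exact ⟨y, 2 * f y + 1, Or.inr rfl, Or.inl rfl, Or.inr (by omega), iff_of_false (by omega) h⟩
  obtain ⟨vg, hvg, hvgside⟩ := exists_odd_adjacent_lt_iff (g k) (G.Adj k z ↔ 2 * f k < vf)
  exact ⟨_, _, IsStep.levelRealiser hC hI (isStep_of_red hC hI hi hin hs hpq habove hZq hKq hk
    hy hz hlt ha hvf hout hside hvg hvgside)⟩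

lemma exists_succ (hC : IsDSeq G C 1) (hI : C.LevelRealiser G i f g) (hi : 1 ≤ i)
    (hin : i < Fintype.card V) : ∃ f' g', C.LevelRealiser G (i + 1) f' g' := by
  obtain ⟨X, Y, hs⟩ := C.exists_split hi hin
  by_cases hred : ∃ q, C.IsRedEdge G i (X ∪ Y) q
  swap
  · exact hI.exists_succ_of_noRed hC hi hin hs fun T h => hred ⟨T, h⟩
  obtain ⟨q, hpq⟩ := hred
  obtain ⟨K, Z, hs', hKZ, hZq, hKq⟩ := hI.exists_roles hC hin hs hpq
  rw [← hKZ] at hpq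
  obtain ⟨k, hk⟩ := (C.parts _).nonempty_of_mem_parts hs'.left_mem
  obtain ⟨y, hy⟩ := (C.parts _).nonempty_of_mem_parts hpq.2.1
  have oriented : ∀ {f g : V → ℤ}, C.LevelRealiser G i f g →
      C.IntervalPairsAbove G i f g (K ∪ Z) q →
      (Homogeneous G K q → ∀ u ∈ K, ∀ w ∈ q, G.Adj u w ↔ Crosses f g u w) →
      ∃ f' g', C.LevelRealiser G (i + 1) f' g' := by
    intro f g hI habove hKq
    have hne : f k ≠ f y := fun h => hpq.2.2.1 <|
      ((C.parts i).part_eq_of_mem hpq.1 (mem_union_left _ hk)).symm.trans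
        (((hI.labelling_fst k y).1 h).trans ((C.parts i).part_eq_of_mem hpq.2.1 hy))
    rcases hne.lt_or_gt with hlt | hlt
    · exact hI.exists_succ_of_red hC hi hin hs' hpq habove hZq hKq hk hy hlt
    · exact hI.neg.exists_succ_of_red hC hi hin hs' hpq habove.neg hZq
        (fun h u hu w hw => (hKq h u hu w hw).trans crosses_neg.symm) hk hy (neg_lt_neg hlt)
  rcases hI.intervalPairsAbove _ _ hpq with habove | habove
  · exact oriented hI habove hKq
  · exact oriented hI.swap habove fun h u hu w hw => (hKq h u hu w hw).trans crosses_swap.symm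

end LevelRealiser

lemma exists_levelRealiser (hC : IsDSeq G C 1) :
    ∃ f g, C.LevelRealiser G (Fintype.card V) f g := by
  rcases Nat.eq_zero_or_pos (Fintype.card V) with hn | hn
  · have : IsEmpty V := Fintype.card_eq_zero_iff.1 hn
    refine ⟨0, 0, fun u => isEmptyElim u, fun u => isEmptyElim u, fun u => isEmptyElim u,
      fun j hj hjn => by omega, fun j hj hjn => by omega, fun p q hpq => ?_⟩
    obtain ⟨u, -⟩ := (C.parts _).nonempty_of_mem_parts hpq.1
    exact isEmptyElim u
  · suffices ∀ i, 1 ≤ i → i ≤ Fintype.card V → ∃ f g, C.LevelRealiser G i f g from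
      this _ hn le_rfl
    intro i hi
    induction i, hi using Nat.le_induction with
    | base => exact fun _ => ⟨0, 0, levelRealiser_one hn⟩
    | succ i hi ih =>
      intro hin
      obtain ⟨f, g, hI⟩ := ih (by omega)
      exact hI.exists_succ hC hi hin

lemma part_card (C : ContractionSeq V) (u : V) : (C.parts (Fintype.card V)).part u = {u} := by
  obtain ⟨x, hx⟩ := card_eq_one.1 (C.parts_top _ (part_mem_parts _ u))
  have hu := mem_part_self (C.parts (Fintype.card V)) u
  rw [hx, mem_singleton] at hu
  rw [hx, hu]

lemma injective_of_isLabelling {h : V → ℤ} (hh : IsLabelling (C.parts (Fintype.card V)) h) :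
    Function.Injective h := fun u w huw => by
  simpa [part_card] using (hh u w).1 huw

namespace LevelRealiser

lemma injective_fst (hI : C.LevelRealiser G (Fintype.card V) f g) : Function.Injective f :=
  injective_of_isLabelling hI.labelling_fst

lemma injective_snd (hI : C.LevelRealiser G (Fintype.card V) f g) : Function.Injective g :=
  injective_of_isLabelling hI.labelling_snd

lemma isRealiser (hI : C.LevelRealiser G (Fintype.card V) f g) {σ τ : V ≃ Fin (Fintype.card V)}
    (hσ : ∀ u w, σ u ≤ σ w ↔ f u ≤ f w) (hτ : ∀ u w, τ u ≤ τ w ↔ g u ≤ g w) :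
    IsRealiser G σ τ := by
  intro u w
  have hσ' : ∀ u w, σ u < σ w ↔ f u < f w := fun u w => by rw [← not_le, hσ, not_le]
  have hτ' : ∀ u w, τ u < τ w ↔ g u < g w := fun u w => by rw [← not_le, hτ, not_le]
  by_cases huw : u = w
  · subst huw
    simp
  have hhom : Homogeneous G {u} {w} := by
    by_cases h : G.Adj u w
    · exact Or.inl (by simpa using h)
    · exact Or.inr (by simpa using h)
  rw [← part_card C u, ← part_card C w] at hhom
  rw [hI.adj_iff_crosses u w (by simp [part_card, huw]) hhom, Crosses, hσ', hσ', hτ', hτ']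

end LevelRealiser

end ContractionSeq

lemma exists_equiv_fin_le_iff {V : Type*} [Fintype V] {f : V → ℤ} (hf : Function.Injective f) :
    ∃ σ : V ≃ Fin (Fintype.card V), ∀ u w, σ u ≤ σ w ↔ f u ≤ f w := by
  let : LinearOrder V := LinearOrder.lift' f hf
  exact ⟨(Fintype.orderIsoFinOfCardEq V rfl).symm.toEquiv,
    fun _ _ => (Fintype.orderIsoFinOfCardEq V rfl).symm.le_iff_le⟩

lemma IsIntervalBy.isIntervalFor {V : Type*} {n : ℕ} {f : V → ℤ} {σ : V ≃ Fin n} {S : Finset V}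
    (hσ : ∀ u w, σ u ≤ σ w ↔ f u ≤ f w) (h : IsIntervalBy f S) : IsIntervalFor σ (↑S : Set V) :=
  fun u v w hu hw h₁ h₂ => h hu hw ((hσ u v).1 h₁) ((hσ v w).1 h₂)

/-- Given a 1-contraction sequence of `G`, `G` is a permutation graph with a
realiser `(σ, τ)` such that every part of every trigraph in the sequence is an interval of
`(σ, τ)`, and for every red edge `xy` of a trigraph, the union of the parts of `x` and `y`
is an interval for one of the orderings while each of the parts is an interval for the
other ordering. -/
theorem stmt_3 {V : Type*} [Fintype V] [DecidableEq V] (G : SimpleGraph V)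
    (C : ContractionSeq V) (hC : IsDSeq G C 1) :
    ∃ σ τ : V ≃ Fin (Fintype.card V), IsRealiser G σ τ ∧
      (∀ i, 1 ≤ i → i ≤ Fintype.card V → ∀ X ∈ (C.parts i).parts,
        IsIntervalFor σ (↑X : Set V) ∨ IsIntervalFor τ (↑X : Set V)) ∧
      (∀ i, 1 ≤ i → i ≤ Fintype.card V →
        ∀ X ∈ (C.parts i).parts, ∀ Y ∈ (C.parts i).parts, X ≠ Y →
          ¬ Homogeneous G X Y →
          ((IsIntervalFor σ (↑(X ∪ Y) : Set V) ∧
              IsIntervalFor τ (↑X : Set V) ∧ IsIntervalFor τ (↑Y : Set V)) ∨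
           (IsIntervalFor τ (↑(X ∪ Y) : Set V) ∧
              IsIntervalFor σ (↑X : Set V) ∧ IsIntervalFor σ (↑Y : Set V)))) := by
  obtain ⟨f, g, hI⟩ := C.exists_levelRealiser hC
  obtain ⟨σ, hσ⟩ := exists_equiv_fin_le_iff hI.injective_fst
  obtain ⟨τ, hτ⟩ := exists_equiv_fin_le_iff hI.injective_snd
  refine ⟨σ, τ, hI.isRealiser hσ hτ, fun i hi hin X hX => ?_,
    fun i hi hin X hX Y hY hne hnh => ?_⟩
  · by_cases hred : ∃ Y, C.IsRedEdge G i X Y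
    · obtain ⟨Y, hXY⟩ := hred
      rcases hI.isIntervalPair i hi hin X Y hXY with h | h
      exacts [Or.inr (h.2.1.isIntervalFor hτ), Or.inl (h.2.1.isIntervalFor hσ)]
    · have h := hI.isIntervalBy_of_noRed i hi hin X hX (not_exists.1 hred)
      exact Or.inl (h.1.isIntervalFor hσ)
  · rcases hI.isIntervalPair i hi hin X Y ⟨hX, hY, hne, hnh⟩ with h | h
    · exact Or.inl ⟨h.1.isIntervalFor hσ, h.2.1.isIntervalFor hτ, h.2.2.isIntervalFor hτ⟩
    · exact Or.inr ⟨h.1.isIntervalFor hτ, h.2.1.isIntervalFor hσ, h.2.2.isIntervalFor hσ⟩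
end

section
/- If G_n, …, G_1 are the trigraphs of a 1-contraction sequence of a graph G, then for every i with 2 ≤ i ≤ n, the underlying graph of G_{i-1} is isomorphic to an induced subgraph of the underlying graph of G_i. -/
open Finset

/-! Let `G_{i-1}` arise from `G_i` by merging the parts `X` and `Y` into `U = X ∪ Y`. A part `Z`
on which `X` and `Y` disagree (one of them sees `Z`, the other not) is a red neighbour of `U`,
so in a 1-sequence there is at most one such `Z`. Hence one of `X`, `Y` is adjacent to exactly
the same remaining parts as `U`, and replacing `U` by that part embeds `G_{i-1}` in `G_i`
as an induced subgraph. -/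

theorem forall_or_iff_left_or_forall_or_iff_right {α : Type*} {s : Set α} {p q : α → Prop}
    (h : {a | a ∈ s ∧ ¬(p a ↔ q a)}.Subsingleton) :
    (∀ a ∈ s, (p a ∨ q a ↔ p a)) ∨ ∀ a ∈ s, (p a ∨ q a ↔ q a) := by
  by_cases hq : ∃ a₀ ∈ s, q a₀ ∧ ¬p a₀
  · obtain ⟨a₀, ha₀, hqa₀, hpa₀⟩ := hq
    refine Or.inr fun a ha => ⟨fun hpq => hpq.elim (fun hpa => by_contra fun hqa => ?_) id, Or.inr⟩
    have : a = a₀ := h ⟨ha, fun hpq => hqa (hpq.1 hpa)⟩ ⟨ha₀, fun hpq => hpa₀ (hpq.2 hqa₀)⟩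
    exact hpa₀ (this ▸ hpa)
  · simp only [not_exists, not_and, not_not] at hq
    exact Or.inl fun a ha => ⟨fun hpq => hpq.elim id (hq a ha), Or.inl⟩

section Merge

variable {V : Type*} {G : SimpleGraph V}

def EdgeBetween (G : SimpleGraph V) (A B : Finset V) : Prop :=
  ∃ a ∈ A, ∃ b ∈ B, G.Adj a b

theorem edgeBetween_union_left [DecidableEq V] {X Y Z : Finset V} :
    EdgeBetween G (X ∪ Y) Z ↔ EdgeBetween G X Z ∨ EdgeBetween G Y Z := by
  simp only [EdgeBetween, mem_union, or_and_right, exists_or]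

theorem edgeBetween_comm {A B : Finset V} : EdgeBetween G A B ↔ EdgeBetween G B A :=
  ⟨fun ⟨a, ha, b, hb, hab⟩ => ⟨b, hb, a, ha, hab.symm⟩,
    fun ⟨b, hb, a, ha, hba⟩ => ⟨a, ha, b, hb, hba.symm⟩⟩

theorem Homogeneous.edgeBetween_iff_of_subset {A X Z : Finset V} (hom : Homogeneous G A Z)
    (hXA : X ⊆ A) (hX : X.Nonempty) (hZ : Z.Nonempty) :
    EdgeBetween G X Z ↔ EdgeBetween G A Z := by
  refine ⟨fun ⟨x, hx, z, hz, hxz⟩ => ⟨x, hXA hx, z, hz, hxz⟩, fun ⟨a, ha, z, hz, haz⟩ => ?_⟩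
  rcases hom with hall | hnone
  · obtain ⟨x, hx⟩ := hX
    obtain ⟨z, hz⟩ := hZ
    exact ⟨x, hx, z, hz, hall x (hXA hx) z hz⟩
  · exact absurd haz (hnone a ha z hz)

variable [Fintype V] [DecidableEq V]

theorem quotientGraph_adj {P : Finpartition (univ : Finset V)} {A B : {X // X ∈ P.parts}} :
    (QuotientGraph G P).Adj A B ↔ A.1 ≠ B.1 ∧ EdgeBetween G A.1 B.1 :=
  and_congr_left' Subtype.ext_iff.not

theorem nonempty_quotientGraph_embedding_of_replace {P Q : Finpartition (univ : Finset V)}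
    {U X₀ : Finset V} (hX₀ : X₀ ∈ P.parts)
    (hrest : ∀ Z ∈ Q.parts, Z ≠ U → Z ∈ P.parts ∧ Z ≠ X₀)
    (hnbr : ∀ Z ∈ Q.parts, Z ≠ U → (EdgeBetween G U Z ↔ EdgeBetween G X₀ Z)) :
    Nonempty (QuotientGraph G Q ↪g QuotientGraph G P) := by
  let f : {W // W ∈ Q.parts} → {W // W ∈ P.parts} := fun W =>
    if h : W.1 = U then ⟨X₀, hX₀⟩ else ⟨W.1, (hrest W.1 W.2 h).1⟩
  have f_val (W) : (f W).1 = if W.1 = U then X₀ else W.1 := by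
    simp only [f]; split_ifs <;> rfl
  have f_val_eq (A B) : (f A).1 = (f B).1 ↔ A.1 = B.1 := by
    rw [f_val, f_val]
    split_ifs with hA hB hB
    · exact iff_of_true rfl (hA.trans hB.symm)
    · exact iff_of_false (hrest B.1 B.2 hB).2.symm fun h => hB (h ▸ hA)
    · exact iff_of_false (hrest A.1 A.2 hA).2 fun h => hA (h.trans hB)
    · rfl
  have f_edge (A B) (hAB : A.1 ≠ B.1) :
      EdgeBetween G (f A).1 (f B).1 ↔ EdgeBetween G A.1 B.1 := by
    rw [f_val, f_val]
    split_ifs with hA hB hB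
    · exact absurd (hA.trans hB.symm) hAB
    · rw [hA]; exact (hnbr B.1 B.2 hB).symm
    · rw [hB, edgeBetween_comm, edgeBetween_comm (A := A.1)]; exact (hnbr A.1 A.2 hA).symm
    · rfl
  refine ⟨⟨⟨f, fun A B h => Subtype.ext ((f_val_eq A B).1 (congrArg Subtype.val h))⟩, ?_⟩⟩
  intro A B
  change (QuotientGraph G P).Adj (f A) (f B) ↔ _
  rw [quotientGraph_adj, quotientGraph_adj, ne_eq, f_val_eq]
  exact and_congr_right fun hAB => f_edge A B hAB

theorem nonempty_quotientGraph_embedding_of_merge {P Q : Finpartition (univ : Finset V)}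
    {X Y : Finset V} (hX : X ∈ P.parts) (hY : Y ∈ P.parts)
    (hQ : Q.parts = insert (X ∪ Y) ((P.parts.erase X).erase Y)) (hred : RedDegLE G Q 1) :
    Nonempty (QuotientGraph G Q ↪g QuotientGraph G P) := by
  have hrest : ∀ Z ∈ Q.parts, Z ≠ X ∪ Y → Z ∈ P.parts ∧ Z ≠ X ∧ Z ≠ Y := by
    intro Z hZ hZU
    rw [hQ, mem_insert, or_iff_right hZU, mem_erase, mem_erase] at hZ
    exact ⟨hZ.2.2, hZ.2.1, hZ.1⟩
  have hdisagree : {Z | Z ∈ {Z | Z ∈ Q.parts ∧ Z ≠ X ∪ Y} ∧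
      ¬(EdgeBetween G X Z ↔ EdgeBetween G Y Z)}.Subsingleton := by
    have hU : X ∪ Y ∈ Q.parts := hQ ▸ mem_insert_self _ _
    refine (Set.ncard_le_one_iff_subsingleton.1 (hred (X ∪ Y) hU)).anti
      fun Z ⟨⟨hZ, hZU⟩, hXY⟩ => ⟨hZ, hZU, fun hom => hXY ?_⟩
    have hZne := Q.nonempty_of_mem_parts hZ
    rw [hom.edgeBetween_iff_of_subset subset_union_left (P.nonempty_of_mem_parts hX) hZne,
      hom.edgeBetween_iff_of_subset subset_union_right (P.nonempty_of_mem_parts hY) hZne]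
  rcases forall_or_iff_left_or_forall_or_iff_right hdisagree with hXsame | hYsame
  · exact nonempty_quotientGraph_embedding_of_replace hX
      (fun Z hZ hZU => ⟨(hrest Z hZ hZU).1, (hrest Z hZ hZU).2.1⟩)
      (fun Z hZ hZU => edgeBetween_union_left.trans (hXsame Z ⟨hZ, hZU⟩))
  · exact nonempty_quotientGraph_embedding_of_replace hY
      (fun Z hZ hZU => ⟨(hrest Z hZ hZU).1, (hrest Z hZ hZU).2.2⟩)
      (fun Z hZ hZU => edgeBetween_union_left.trans (hYsame Z ⟨hZ, hZU⟩))

end Merge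

/-- In a 1-contraction sequence `G_n, …, G_1` of `G`, the underlying graph of
`G_{i-1}` is isomorphic to an induced subgraph of the underlying graph of `G_i`, for every
`2 ≤ i ≤ n`. -/
theorem stmt_6 {V : Type*} [Fintype V] [DecidableEq V] (G : SimpleGraph V)
    (C : ContractionSeq V) (hC : IsDSeq G C 1)
    (i : ℕ) (h2 : 2 ≤ i) (hn : i ≤ Fintype.card V) :
    Nonempty (QuotientGraph G (C.parts (i - 1)) ↪g QuotientGraph G (C.parts i)) := by
  obtain ⟨X, hX, Y, hY, -, hmerge⟩ := C.merge (i - 1) (by omega) (by omega)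
  rw [Nat.sub_add_cancel (by omega : 1 ≤ i)] at hX hY hmerge
  exact nonempty_quotientGraph_embedding_of_merge hX hY hmerge (hC (i - 1) (by omega) (by omega))
end
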